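/- arXiv:1710.08394 — 12 statements merged into one kernel-verified Lean document; each statement's English description precedes it below -/
import Mathlib

section
/- Let v and w be independent, integrable, real-valued random variables on a probability space, let p be a real number, and let q = min(P[v ≥ p], P[w ≤ p]). Then q · E[(v − w)·1(w ≤ v)] ≤ E[(v − w)·1(w ≤ p ∧ p ≤ v)]; in particular, if q > 0 then OPT ≤ (1/q)·GFT(p). -/
open MeasureTheory ProbabilityTheory

/-! Pointwise, `(v - w)·1(w ≤ p ≤ v) = (v - p)⁺·1(w ≤ p) + (p - w)⁺·1(p ≤ v)` and
`(v - w)·1(w ≤ v) ≤ (v - p)⁺ + (p - w)⁺`. By independence the first identity gives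
`GFT(p) = E[(v - p)⁺]·P[w ≤ p] + P[p ≤ v]·E[(p - w)⁺]`, which is at least
`q·(E[(v - p)⁺] + E[(p - w)⁺]) ≥ q·OPT`. -/

lemma ite_le_sub_le_max_sub_add_max_sub (x y p : ℝ) :
    (if y ≤ x then x - y else 0) ≤ max (x - p) 0 + max (p - y) 0 := by
  split_ifs
  · linarith [le_max_left (x - p) 0, le_max_left (p - y) 0]
  · positivity

lemma ite_and_sub_eq_max_mul_indicator_add (x y p : ℝ) :
    (if y ≤ p ∧ p ≤ x then x - y else 0) =
      max (x - p) 0 * (Set.Iic p).indicator 1 y + max (p - y) 0 * (Set.Ici p).indicator 1 x := by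
  by_cases hy : y ≤ p <;> by_cases hx : p ≤ x <;>
    simp [hx, hy] <;> first | ring | linarith

section

variable {Ω 𝓧 𝓨 : Type*} [MeasurableSpace Ω] [MeasurableSpace 𝓧] [MeasurableSpace 𝓨]
  {μ : Measure Ω}

lemma integral_indicator_one_comp {Y : Ω → 𝓨} (hY : AEMeasurable Y μ) {s : Set 𝓨}
    (hs : MeasurableSet s) :
    ∫ ω, s.indicator 1 (Y ω) ∂μ = μ.real (Y ⁻¹' s) := by
  rw [← integral_map hY (aestronglyMeasurable_one.indicator hs), integral_indicator_one hs,
    map_measureReal_apply_of_aemeasurable hY hs]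

lemma ProbabilityTheory.IndepFun.integral_comp_mul_indicator_one_comp
    {X : Ω → 𝓧} {Y : Ω → 𝓨} (hXY : IndepFun X Y μ) (hX : AEMeasurable X μ)
    (hY : AEMeasurable Y μ) {f : 𝓧 → ℝ} (hf : AEStronglyMeasurable f (μ.map X)) {s : Set 𝓨}
    (hs : MeasurableSet s) :
    ∫ ω, f (X ω) * s.indicator 1 (Y ω) ∂μ = (∫ ω, f (X ω) ∂μ) * μ.real (Y ⁻¹' s) := by
  rw [hXY.integral_fun_comp_mul_comp hX hY hf (aestronglyMeasurable_one.indicator hs),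
    integral_indicator_one_comp hY hs]

lemma MeasureTheory.Integrable.mul_indicator_one_comp {g : Ω → ℝ} (hg : Integrable g μ)
    {Y : Ω → 𝓨} (hY : AEMeasurable Y μ) {s : Set 𝓨} (hs : MeasurableSet s) :
    Integrable (fun ω => g ω * s.indicator 1 (Y ω)) μ := by
  refine hg.mul_bdd (c := 1) ?_ (Filter.Eventually.of_forall fun ω => ?_)
  · exact (measurable_one.indicator hs).comp_aemeasurable hY |>.aestronglyMeasurable
  · by_cases h : Y ω ∈ s <;> simp [h]

variable [IsFiniteMeasure μ] {v w : Ω → ℝ}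

lemma integral_ite_and_sub_eq_of_indepFun (hindep : IndepFun v w μ) (hvi : Integrable v μ)
    (hwi : Integrable w μ) (p : ℝ) :
    ∫ ω, (if w ω ≤ p ∧ p ≤ v ω then v ω - w ω else 0) ∂μ =
      (∫ ω, max (v ω - p) 0 ∂μ) * μ.real {ω | w ω ≤ p} +
        μ.real {ω | p ≤ v ω} * ∫ ω, max (p - w ω) 0 ∂μ := by
  have hf : Integrable (fun ω => max (v ω - p) 0) μ := (hvi.sub (integrable_const p)).pos_part
  have hg : Integrable (fun ω => max (p - w ω) 0) μ := ((integrable_const p).sub hwi).pos_part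
  have hvp_cont : Continuous fun x : ℝ => max (x - p) 0 := by fun_prop
  have hpw_cont : Continuous fun x : ℝ => max (p - x) 0 := by fun_prop
  simp_rw [ite_and_sub_eq_max_mul_indicator_add]
  rw [integral_add (hf.mul_indicator_one_comp hwi.aemeasurable measurableSet_Iic)
      (hg.mul_indicator_one_comp hvi.aemeasurable measurableSet_Ici),
    hindep.integral_comp_mul_indicator_one_comp hvi.aemeasurable hwi.aemeasurable
      hvp_cont.aestronglyMeasurable measurableSet_Iic,
    hindep.symm.integral_comp_mul_indicator_one_comp hwi.aemeasurable hvi.aemeasurable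
      hpw_cont.aestronglyMeasurable measurableSet_Ici, mul_comm (∫ ω, max (p - w ω) 0 ∂μ)]
  rfl

lemma integral_ite_le_sub_le_integral_max_add (hvi : Integrable v μ) (hwi : Integrable w μ)
    (p : ℝ) :
    ∫ ω, (if w ω ≤ v ω then v ω - w ω else 0) ∂μ ≤
      (∫ ω, max (v ω - p) 0 ∂μ) + ∫ ω, max (p - w ω) 0 ∂μ := by
  have hf : Integrable (fun ω => max (v ω - p) 0) μ := (hvi.sub (integrable_const p)).pos_part
  have hg : Integrable (fun ω => max (p - w ω) 0) μ := ((integrable_const p).sub hwi).pos_part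
  rw [← integral_add hf hg]
  refine integral_mono_of_nonneg (Filter.Eventually.of_forall fun ω => ?_) (hf.add hg)
    (Filter.Eventually.of_forall fun ω => ite_le_sub_le_max_sub_add_max_sub _ _ p)
  dsimp only [Pi.zero_apply]
  split_ifs <;> linarith

end

theorem stmt0_general {Ω : Type*} [MeasurableSpace Ω] (μ : Measure Ω) [IsProbabilityMeasure μ]
    (v w : Ω → ℝ)
    (hvi : Integrable v μ) (hwi : Integrable w μ)
    (hindep : IndepFun v w μ) (p : ℝ) (q : ℝ)
    (hq : q = min (μ {ω | p ≤ v ω}).toReal (μ {ω | w ω ≤ p}).toReal) :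
    (q * ∫ ω, (if w ω ≤ v ω then v ω - w ω else 0) ∂μ ≤
        ∫ ω, (if w ω ≤ p ∧ p ≤ v ω then v ω - w ω else 0) ∂μ) ∧
      (0 < q →
        ∫ ω, (if w ω ≤ v ω then v ω - w ω else 0) ∂μ ≤
          (1 / q) * ∫ ω, (if w ω ≤ p ∧ p ≤ v ω then v ω - w ω else 0) ∂μ) := by
  have hq₀ : 0 ≤ q := hq ▸ le_min ENNReal.toReal_nonneg ENNReal.toReal_nonneg
  have hqv : q ≤ μ.real {ω | p ≤ v ω} := hq ▸ min_le_left _ _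
  have hqw : q ≤ μ.real {ω | w ω ≤ p} := hq ▸ min_le_right _ _
  have hF : 0 ≤ ∫ ω, max (v ω - p) 0 ∂μ := integral_nonneg fun _ => le_max_right _ _
  have hG : 0 ≤ ∫ ω, max (p - w ω) 0 ∂μ := integral_nonneg fun _ => le_max_right _ _
  have key : q * ∫ ω, (if w ω ≤ v ω then v ω - w ω else 0) ∂μ ≤
      ∫ ω, (if w ω ≤ p ∧ p ≤ v ω then v ω - w ω else 0) ∂μ := by
    rw [integral_ite_and_sub_eq_of_indepFun hindep hvi hwi p]
    calc _ ≤ q * ((∫ ω, max (v ω - p) 0 ∂μ) + ∫ ω, max (p - w ω) 0 ∂μ) :=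
          mul_le_mul_of_nonneg_left (integral_ite_le_sub_le_integral_max_add hvi hwi p) hq₀
      _ ≤ _ := by nlinarith [mul_le_mul_of_nonneg_left hqw hF, mul_le_mul_of_nonneg_left hqv hG]
  refine ⟨key, fun hq_pos => ?_⟩
  rwa [one_div, inv_mul_eq_div, le_div_iff₀ hq_pos, mul_comm]

theorem stmt0 {Ω : Type*} [MeasurableSpace Ω] (μ : Measure Ω) [IsProbabilityMeasure μ]
    (v w : Ω → ℝ) (hv : Measurable v) (hw : Measurable w)
    (hvi : Integrable v μ) (hwi : Integrable w μ)
    (hindep : IndepFun v w μ) (p : ℝ) (q : ℝ)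
    (hq : q = min (μ {ω | p ≤ v ω}).toReal (μ {ω | w ω ≤ p}).toReal) :
    (q * ∫ ω, (if w ω ≤ v ω then v ω - w ω else 0) ∂μ ≤
        ∫ ω, (if w ω ≤ p ∧ p ≤ v ω then v ω - w ω else 0) ∂μ) ∧
      (0 < q →
        ∫ ω, (if w ω ≤ v ω then v ω - w ω else 0) ∂μ ≤
          (1 / q) * ∫ ω, (if w ω ≤ p ∧ p ≤ v ω then v ω - w ω else 0) ∂μ) :=
  stmt0_general μ v w hvi hwi hindep p q hq
end

section
/- Let v and w be independent, integrable, nonnegative real-valued random variables on a probability space whose distributions are atomless, and suppose r = P[v ≥ w] > 0. Then there exists a price p ∈ ℝ such that E[(v − w)·1(w ≤ v)] ≤ 4·⌈log₂(2/r)⌉ · E[(v − w)·1(w ≤ p ∧ p ≤ v)], i.e., some fixed price achieves a 4⌈log₂(2/r)⌉-approximation to the optimal gain from trade. -/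
open MeasureTheory ProbabilityTheory Filter Topology Set

/-!
Write `F t = P[w ≤ t]` and `G t = P[t ≤ v]`; both are continuous because the laws are atomless.
By independence, `GFT p ≥ G p * E[(p - w)⁺]`, while the part `E[(min v p - max w x)⁺]` of the
optimal gain realised between two prices `x` and `p` is at most `G x * E[(p - w)⁺]`.

Take `p*` with `F p* = G p* = c`; as every trade has `w ≤ p*` or `p* ≤ v`, `c ≥ r / 2`. Cutting
the prices below `p*` where `G` takes the values `1/2, 1/4, …` down to `c` splits the gain below
`p*` into `N = ⌈log₂ (2 / r)⌉` pieces, each at most twice the gain from trade at its upper end. The mirror image `(v, w) ↦ (-w, -v)` exchanges `F` and `G` and treats the gain above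
`p*` in the same way, so `OPT ≤ 4 N max_p GFT p`.
-/

lemma exists_nat_eq_ceil_logb_two_div {r : ℝ} (hr0 : 0 < r) (hr1 : r ≤ 1) :
    ∃ N : ℕ, 1 ≤ N ∧ (N : ℝ) = ⌈Real.logb 2 (2 / r)⌉ ∧ (1 / 2 : ℝ) ^ N ≤ r / 2 := by
  have hlog : 1 ≤ Real.logb 2 (2 / r) := by
    rw [Real.le_logb_iff_rpow_le one_lt_two (by positivity), Real.rpow_one, le_div_iff₀ hr0]
    linarith
  obtain ⟨N, hN⟩ := Int.eq_ofNat_of_zero_le (Int.ceil_nonneg (zero_le_one.trans hlog))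
  have hceil : Real.logb 2 (2 / r) ≤ N := by exact_mod_cast hN ▸ Int.le_ceil _
  refine ⟨N, by exact_mod_cast hlog.trans hceil, by exact_mod_cast hN.symm, ?_⟩
  rw [Real.logb_le_iff_le_rpow one_lt_two (by positivity), Real.rpow_natCast,
    div_le_iff₀ hr0] at hceil
  rw [div_pow, one_pow, div_le_div_iff₀ (by positivity) two_pos]
  linarith

lemma max_min_sub_le_add (v w x p : ℝ) :
    max (min v p - w) 0 ≤ max (min v x - w) 0 + max (min v p - max w x) 0 := by
  simp only [max_def, min_def]
  split_ifs <;> linarith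

lemma ite_sub_eq_add (v w p : ℝ) :
    (if w ≤ v then v - w else 0) = max (min v p - w) 0 + max (v - max w p) 0 := by
  simp only [max_def, min_def]
  split_ifs <;> linarith

lemma max_sub_max_eq_max_min_neg_sub_neg (v w p : ℝ) :
    max (v - max w p) 0 = max (min (-w) (-p) - -v) 0 := by
  rw [min_neg_neg]
  ring_nf

lemma exists_add_le_mul_of_le_mul {α : Type*} {f : α → ℝ} {a b s t : ℝ} {x y : α} (hs : 0 ≤ s)
    (ht : 0 ≤ t) (ha : a ≤ s * f x) (hb : b ≤ t * f y) : ∃ z, a + b ≤ (s + t) * f z := by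
  rcases le_total (f x) (f y) with h | h
  · exact ⟨y, by nlinarith⟩
  · exact ⟨x, by nlinarith⟩

lemma ProbabilityTheory.continuous_cdf (ν : Measure ℝ) [IsProbabilityMeasure ν]
    [NullSingletonClass ν] : Continuous (cdf ν) := by
  refine continuous_iff_continuousAt.2 fun x => ?_
  have hleft : Function.leftLim (cdf ν) x = cdf ν x := by
    have h := (cdf ν).measure_singleton x
    rw [measure_cdf, measure_singleton, eq_comm, ENNReal.ofReal_eq_zero, sub_nonpos] at h
    exact le_antisymm (Monotone.leftLim_le (cdf ν).mono le_rfl) h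
  rw [(cdf ν).mono.continuousAt_iff_leftLim_eq_rightLim, hleft, (cdf ν).rightLim_eq]

section DistributionFunction

variable {Ω : Type*} [MeasurableSpace Ω] {μ : Measure Ω} [IsProbabilityMeasure μ] {X : Ω → ℝ}

lemma measureReal_le_eq_cdf_map (hX : Measurable X) (t : ℝ) :
    μ.real {ω | X ω ≤ t} = cdf (μ.map X) t := by
  have := Measure.isProbabilityMeasure_map (μ := μ) hX.aemeasurable
  rw [cdf_eq_real, map_measureReal_apply hX measurableSet_Iic]
  rfl

lemma continuous_measureReal_le (hX : Measurable X) (hXa : ∀ x : ℝ, μ {ω | X ω = x} = 0) :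
    Continuous fun t => μ.real {ω | X ω ≤ t} := by
  have : NullSingletonClass (μ.map X) :=
    ⟨fun x => (Measure.map_apply hX (measurableSet_singleton x)).trans (hXa x)⟩
  have := Measure.isProbabilityMeasure_map (μ := μ) hX.aemeasurable
  simp_rw [measureReal_le_eq_cdf_map hX]
  exact continuous_cdf _

lemma tendsto_measureReal_le_atBot (hX : Measurable X) :
    Tendsto (fun t => μ.real {ω | X ω ≤ t}) atBot (𝓝 0) := by
  simp_rw [measureReal_le_eq_cdf_map hX]
  exact tendsto_cdf_atBot _

lemma tendsto_measureReal_le_atTop (hX : Measurable X) :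
    Tendsto (fun t => μ.real {ω | X ω ≤ t}) atTop (𝓝 1) := by
  simp_rw [measureReal_le_eq_cdf_map hX]
  exact tendsto_cdf_atTop _

omit [IsProbabilityMeasure μ] in
lemma measureReal_ge_eq_neg_le (t : ℝ) :
    μ.real {ω | t ≤ X ω} = μ.real {ω | -X ω ≤ -t} := by
  simp_rw [neg_le_neg_iff]

lemma continuous_measureReal_ge (hX : Measurable X) (hXa : ∀ x : ℝ, μ {ω | X ω = x} = 0) :
    Continuous fun t => μ.real {ω | t ≤ X ω} := by
  have hnegXa : ∀ x : ℝ, μ {ω | -X ω = x} = 0 := fun x => by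
    simpa only [neg_eq_iff_eq_neg] using hXa (-x)
  simp_rw [measureReal_ge_eq_neg_le]
  exact (continuous_measureReal_le hX.neg hnegXa).comp continuous_neg

lemma tendsto_measureReal_ge_atBot (hX : Measurable X) :
    Tendsto (fun t => μ.real {ω | t ≤ X ω}) atBot (𝓝 1) := by
  simp_rw [measureReal_ge_eq_neg_le]
  exact (tendsto_measureReal_le_atTop hX.neg).comp tendsto_neg_atBot_atTop

lemma tendsto_measureReal_ge_atTop (hX : Measurable X) :
    Tendsto (fun t => μ.real {ω | t ≤ X ω}) atTop (𝓝 0) := by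
  simp_rw [measureReal_ge_eq_neg_le]
  exact (tendsto_measureReal_le_atBot hX.neg).comp tendsto_neg_atTop_atBot

end DistributionFunction

noncomputable def gainFromTrade {Ω : Type*} [MeasurableSpace Ω] (μ : Measure Ω) (v w : Ω → ℝ)
    (p : ℝ) : ℝ :=
  ∫ ω, (if w ω ≤ p ∧ p ≤ v ω then v ω - w ω else 0) ∂μ

section GainFromTrade

variable {Ω : Type*} [MeasurableSpace Ω] {μ : Measure Ω} {v w : Ω → ℝ}

lemma gainFromTrade_nonneg (p : ℝ) : 0 ≤ gainFromTrade μ v w p :=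
  integral_nonneg fun ω => by
    show (0 : ℝ) ≤ _
    split_ifs with h
    · linarith [h.1, h.2]
    · rfl

lemma gainFromTrade_neg (p : ℝ) :
    gainFromTrade μ (fun ω => -w ω) (fun ω => -v ω) p = gainFromTrade μ v w (-p) := by
  unfold gainFromTrade
  congr 1 with ω
  simp only [neg_le, le_neg, neg_sub_neg, and_comm]

lemma integrable_ite_sub (hv : Measurable v) (hw : Measurable w) (hvi : Integrable v μ)
    (hwi : Integrable w μ) (p : ℝ) :
    Integrable (fun ω => if w ω ≤ p ∧ p ≤ v ω then v ω - w ω else 0) μ := by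
  have hs : MeasurableSet {ω | w ω ≤ p ∧ p ≤ v ω} :=
    (measurableSet_le hw measurable_const).inter (measurableSet_le measurable_const hv)
  refine ((hvi.sub hwi).indicator hs).congr (ae_of_all _ fun ω => ?_)
  simp [Set.indicator_apply]

lemma ProbabilityTheory.IndepFun.integral_indicator_mul_max_sub (hindep : IndepFun v w μ)
    (hv : Measurable v) (hw : Measurable w) (x y : ℝ) :
    ∫ ω, (Ici x).indicator 1 (v ω) * max (y - w ω) 0 ∂μ =
      μ.real {ω | x ≤ v ω} * ∫ ω, max (y - w ω) 0 ∂μ := by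
  rw [hindep.integral_fun_comp_mul_comp (f := (Ici x).indicator 1) (g := fun t => max (y - t) 0)
    hv.aemeasurable hw.aemeasurable
    (measurable_const.indicator measurableSet_Ici).aestronglyMeasurable
    ((measurable_const.sub measurable_id).max measurable_const).aestronglyMeasurable]
  simp_rw [← Set.indicator_comp_right (g := (1 : ℝ → ℝ)) v, Pi.one_comp]
  rw [integral_indicator_one (hv measurableSet_Ici)]
  rfl

lemma mul_integral_max_sub_le_gainFromTrade (hindep : IndepFun v w μ) (hv : Measurable v)
    (hw : Measurable w) (hvi : Integrable v μ) (hwi : Integrable w μ) (p : ℝ) :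
    μ.real {ω | p ≤ v ω} * ∫ ω, max (p - w ω) 0 ∂μ ≤ gainFromTrade μ v w p := by
  rw [← hindep.integral_indicator_mul_max_sub hv hw]
  refine integral_mono_of_nonneg (ae_of_all _ fun ω => ?_)
    (integrable_ite_sub hv hw hvi hwi p) (ae_of_all _ fun ω => ?_)
  · exact mul_nonneg (indicator_nonneg (fun _ _ => zero_le_one) _) (le_max_right _ _)
  by_cases hp : p ≤ v ω
  · simp only [indicator_of_mem (show v ω ∈ Ici p from hp), Pi.one_apply, one_mul]
    by_cases hwp : w ω ≤ p
    · rw [if_pos ⟨hwp, hp⟩, max_eq_left (by linarith)]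
      linarith
    · rw [if_neg (fun h => hwp h.1), max_eq_right (by linarith)]
  · simp only [indicator_of_notMem (show v ω ∉ Ici p from hp), zero_mul,
      if_neg (fun h : _ ∧ _ => hp h.2), le_refl]

variable [IsFiniteMeasure μ]

lemma integrable_max_sub (hwi : Integrable w μ) (y : ℝ) :
    Integrable (fun ω => max (y - w ω) 0) μ :=
  ((integrable_const y).sub hwi).pos_part

lemma integrable_max_min_sub_max (hv : Measurable v) (hw : Measurable w) (hwi : Integrable w μ)
    (x y : ℝ) : Integrable (fun ω => max (min (v ω) y - max (w ω) x) 0) μ := by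
  refine (integrable_max_sub hwi y).mono' (by fun_prop) (ae_of_all _ fun ω => ?_)
  rw [Real.norm_of_nonneg (le_max_right _ _)]
  exact max_le_max_right 0 (sub_le_sub (min_le_right _ _) (le_max_left _ _))

lemma integrable_max_min_sub (hv : Measurable v) (hw : Measurable w) (hwi : Integrable w μ)
    (p : ℝ) : Integrable (fun ω => max (min (v ω) p - w ω) 0) μ := by
  refine (integrable_max_sub hwi p).mono' (by fun_prop) (ae_of_all _ fun ω => ?_)
  rw [Real.norm_of_nonneg (le_max_right _ _)]
  exact max_le_max_right 0 (sub_le_sub_right (min_le_right _ _) _)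

lemma integrable_indicator_mul_max_sub (hv : Measurable v) (hw : Measurable w)
    (hwi : Integrable w μ) (x y : ℝ) :
    Integrable (fun ω => (Ici x).indicator 1 (v ω) * max (y - w ω) 0) μ := by
  refine (integrable_max_sub hwi y).mono' ?_ (ae_of_all _ fun ω => ?_)
  · exact (((measurable_const.indicator measurableSet_Ici).comp hv).mul
      ((measurable_const.sub hw).max measurable_const)).aestronglyMeasurable
  · rw [norm_mul, Real.norm_of_nonneg (le_max_right _ _)]
    refine mul_le_of_le_one_left (le_max_right _ _) ?_
    by_cases hx : v ω ∈ Ici x <;> simp [hx]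

lemma integral_max_min_sub_max_le (hindep : IndepFun v w μ) (hv : Measurable v)
    (hw : Measurable w) (hwi : Integrable w μ) (x y : ℝ) :
    ∫ ω, max (min (v ω) y - max (w ω) x) 0 ∂μ ≤
      μ.real {ω | x ≤ v ω} * ∫ ω, max (y - w ω) 0 ∂μ := by
  rw [← hindep.integral_indicator_mul_max_sub hv hw]
  refine integral_mono_of_nonneg (ae_of_all _ fun ω => le_max_right _ _)
    (integrable_indicator_mul_max_sub hv hw hwi x y) (ae_of_all _ fun ω => ?_)
  by_cases hx : x ≤ v ω
  · simp only [indicator_of_mem (show v ω ∈ Ici x from hx), Pi.one_apply, one_mul]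
    exact max_le_max_right 0 (sub_le_sub (min_le_right _ _) (le_max_left _ _))
  · simp only [indicator_of_notMem (show v ω ∉ Ici x from hx), zero_mul]
    exact (max_eq_right (by linarith [min_le_left (v ω) y, le_max_right (w ω) x])).le

lemma integral_ite_sub_eq_add (hv : Measurable v) (hw : Measurable w) (hvi : Integrable v μ)
    (hwi : Integrable w μ) (p : ℝ) :
    ∫ ω, (if w ω ≤ v ω then v ω - w ω else 0) ∂μ =
      ∫ ω, max (min (v ω) p - w ω) 0 ∂μ + ∫ ω, max (v ω - max (w ω) p) 0 ∂μ := by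
  have hupper : Integrable (fun ω => max (v ω - max (w ω) p) 0) μ := by
    simp_rw [max_sub_max_eq_max_min_neg_sub_neg]
    exact integrable_max_min_sub hw.neg hv.neg hvi.neg (-p)
  simp_rw [ite_sub_eq_add _ _ p]
  exact integral_add (integrable_max_min_sub hv hw hwi p) hupper

end GainFromTrade

section Levels

variable {Ω : Type*} [MeasurableSpace Ω] {μ : Measure Ω} [IsProbabilityMeasure μ] {v w : Ω → ℝ}

lemma exists_measureReal_ge_eq (hv : Measurable v) (hva : ∀ x : ℝ, μ {ω | v ω = x} = 0)
    {p c : ℝ} (hpc : μ.real {ω | p ≤ v ω} ≤ c) (hc : c < 1) :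
    ∃ x, μ.real {ω | x ≤ v ω} = c := by
  obtain ⟨t, ht⟩ :=
    ((tendsto_measureReal_ge_atBot hv (μ := μ)).eventually (lt_mem_nhds hc)).exists
  exact intermediate_value_univ p t (continuous_measureReal_ge hv hva) ⟨hpc, ht.le⟩

lemma exists_measureReal_le_eq_measureReal_ge (hv : Measurable v) (hw : Measurable w)
    (hva : ∀ x : ℝ, μ {ω | v ω = x} = 0) (hwa : ∀ x : ℝ, μ {ω | w ω = x} = 0) :
    ∃ p, μ.real {ω | w ω ≤ p} = μ.real {ω | p ≤ v ω} := by
  have hbot :=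
    (tendsto_measureReal_le_atBot hw (μ := μ)).sub (tendsto_measureReal_ge_atBot hv (μ := μ))
  have htop :=
    (tendsto_measureReal_le_atTop hw (μ := μ)).sub (tendsto_measureReal_ge_atTop hv (μ := μ))
  obtain ⟨a, ha⟩ := (hbot.eventually (gt_mem_nhds (by norm_num : (0 : ℝ) - 1 < 0))).exists
  obtain ⟨b, hb⟩ := (htop.eventually (lt_mem_nhds (by norm_num : (0 : ℝ) < 1 - 0))).exists
  obtain ⟨p, hp⟩ := intermediate_value_univ a b
    ((continuous_measureReal_le hw hwa).sub (continuous_measureReal_ge hv hva)) ⟨ha.le, hb.le⟩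
  exact ⟨p, sub_eq_zero.1 hp⟩

end Levels

section Halves

variable {Ω : Type*} [MeasurableSpace Ω] {μ : Measure Ω} [IsProbabilityMeasure μ] {v w : Ω → ℝ}

theorem exists_integral_max_min_sub_le_gainFromTrade (hindep : IndepFun v w μ)
    (hv : Measurable v) (hw : Measurable w) (hvi : Integrable v μ) (hwi : Integrable w μ)
    (hva : ∀ x : ℝ, μ {ω | v ω = x} = 0) {n : ℕ} (hn : 1 ≤ n) {p : ℝ}
    (hp : (1 / 2 : ℝ) ^ n ≤ μ.real {ω | p ≤ v ω}) :
    ∃ q, ∫ ω, max (min (v ω) p - w ω) 0 ∂μ ≤ 2 * n * gainFromTrade μ v w q := by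
  induction n, hn using Nat.le_induction generalizing p with
  | base =>
    refine ⟨p, ?_⟩
    have hS : 0 ≤ ∫ ω, max (p - w ω) 0 ∂μ := integral_nonneg fun ω => le_max_right _ _
    calc ∫ ω, max (min (v ω) p - w ω) 0 ∂μ ≤ ∫ ω, max (p - w ω) 0 ∂μ :=
          integral_mono_of_nonneg (ae_of_all _ fun ω => le_max_right _ _)
            (integrable_max_sub hwi p)
            (ae_of_all _ fun ω => max_le_max_right 0 (sub_le_sub_right (min_le_right _ _) _))
      _ ≤ 2 * (μ.real {ω | p ≤ v ω} * ∫ ω, max (p - w ω) 0 ∂μ) := by nlinarith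
      _ ≤ 2 * ((1 : ℕ) : ℝ) * gainFromTrade μ v w p := by
          have := mul_integral_max_sub_le_gainFromTrade hindep hv hw hvi hwi p
          push_cast
          linarith
  | succ n hn ih =>
    by_cases hpn : (1 / 2 : ℝ) ^ n ≤ μ.real {ω | p ≤ v ω}
    · obtain ⟨q, hq⟩ := ih hpn
      refine ⟨q, hq.trans (mul_le_mul_of_nonneg_right ?_ (gainFromTrade_nonneg q))⟩
      push_cast
      linarith
    -- Insert a price `x` one halving step below `p`: the slice between `x` and `p` is then
    -- paid for by the gain from trade at `p`.
    obtain ⟨x, hx⟩ := exists_measureReal_ge_eq hv hva (not_le.1 hpn).le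
      (pow_lt_one₀ (by norm_num) (by norm_num) (by omega))
    obtain ⟨q, hq⟩ := ih hx.ge
    have hslice : ∫ ω, max (min (v ω) p - max (w ω) x) 0 ∂μ ≤ 2 * gainFromTrade μ v w p := by
      have hS : 0 ≤ ∫ ω, max (p - w ω) 0 ∂μ := integral_nonneg fun ω => le_max_right _ _
      have hGFT := mul_integral_max_sub_le_gainFromTrade hindep hv hw hvi hwi p
      have hhalf : (1 / 2 : ℝ) ^ n = 2 * (1 / 2) ^ (n + 1) := by ring
      calc _ ≤ μ.real {ω | x ≤ v ω} * ∫ ω, max (p - w ω) 0 ∂μ :=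
            integral_max_min_sub_max_le hindep hv hw hwi x p
        _ ≤ 2 * (μ.real {ω | p ≤ v ω} * ∫ ω, max (p - w ω) 0 ∂μ) := by
            rw [hx, hhalf]; nlinarith
        _ ≤ 2 * gainFromTrade μ v w p := by linarith
    have hsplit : ∫ ω, max (min (v ω) p - w ω) 0 ∂μ ≤
        ∫ ω, max (min (v ω) x - w ω) 0 ∂μ + ∫ ω, max (min (v ω) p - max (w ω) x) 0 ∂μ := by
      rw [← integral_add (integrable_max_min_sub hv hw hwi x)
        (integrable_max_min_sub_max hv hw hwi x p)]
      exact integral_mono_of_nonneg (ae_of_all _ fun ω => le_max_right _ _)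
        ((integrable_max_min_sub hv hw hwi x).add (integrable_max_min_sub_max hv hw hwi x p))
        (ae_of_all _ fun ω => max_min_sub_le_add (v ω) (w ω) x p)
    obtain ⟨q', hq'⟩ := exists_add_le_mul_of_le_mul (by positivity) zero_le_two hq hslice
    exact ⟨q', hsplit.trans (hq'.trans_eq (by push_cast; ring))⟩

theorem exists_integral_max_sub_max_le_gainFromTrade (hindep : IndepFun v w μ)
    (hv : Measurable v) (hw : Measurable w) (hvi : Integrable v μ) (hwi : Integrable w μ)
    (hwa : ∀ x : ℝ, μ {ω | w ω = x} = 0) {n : ℕ} (hn : 1 ≤ n) {p : ℝ}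
    (hp : (1 / 2 : ℝ) ^ n ≤ μ.real {ω | w ω ≤ p}) :
    ∃ q, ∫ ω, max (v ω - max (w ω) p) 0 ∂μ ≤ 2 * n * gainFromTrade μ v w q := by
  have hnegwa : ∀ x : ℝ, μ {ω | -w ω = x} = 0 := fun x => by
    simpa only [neg_eq_iff_eq_neg] using hwa (-x)
  have hp' : (1 / 2 : ℝ) ^ n ≤ μ.real {ω | -p ≤ -w ω} := by simpa only [neg_le_neg_iff] using hp
  obtain ⟨q, hq⟩ := exists_integral_max_min_sub_le_gainFromTrade
    (hindep.symm.comp measurable_neg measurable_neg) hw.neg hv.neg hwi.neg hvi.neg hnegwa hn hp'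
  refine ⟨-q, ?_⟩
  simp_rw [max_sub_max_eq_max_min_neg_sub_neg, ← gainFromTrade_neg]
  exact hq

end Halves

theorem stmt2_general {Ω : Type*} [MeasurableSpace Ω] (μ : Measure Ω) [IsProbabilityMeasure μ]
    (v w : Ω → ℝ) (hv : Measurable v) (hw : Measurable w)
    (hvi : Integrable v μ) (hwi : Integrable w μ)
    (hva : ∀ x : ℝ, μ {ω | v ω = x} = 0) (hwa : ∀ x : ℝ, μ {ω | w ω = x} = 0)
    (hindep : IndepFun v w μ)
    (r : ℝ) (hr : r = (μ {ω | w ω ≤ v ω}).toReal) (hrpos : 0 < r) :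
    ∃ p : ℝ,
      ∫ ω, (if w ω ≤ v ω then v ω - w ω else 0) ∂μ ≤
        4 * (⌈Real.logb 2 (2 / r)⌉ : ℝ) *
          ∫ ω, (if w ω ≤ p ∧ p ≤ v ω then v ω - w ω else 0) ∂μ := by
  obtain ⟨p, hp⟩ := exists_measureReal_le_eq_measureReal_ge hv hw hva hwa (μ := μ)
  have hrc : r ≤ 2 * μ.real {ω | w ω ≤ p} := by
    calc r = μ.real {ω | w ω ≤ v ω} := hr
      _ ≤ μ.real ({ω | w ω ≤ p} ∪ {ω | p ≤ v ω}) :=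
          measureReal_mono fun ω (h : w ω ≤ v ω) => (le_total (w ω) p).imp id (·.trans h)
      _ ≤ 2 * μ.real {ω | w ω ≤ p} := by
          rw [two_mul]; nth_rw 2 [hp]; exact measureReal_union_le _ _
  obtain ⟨N, hN, hNceil, hNr⟩ :=
    exists_nat_eq_ceil_logb_two_div hrpos (hr ▸ measureReal_le_one)
  have hNc : (1 / 2 : ℝ) ^ N ≤ μ.real {ω | w ω ≤ p} := by linarith
  obtain ⟨q₁, h₁⟩ :=
    exists_integral_max_min_sub_le_gainFromTrade hindep hv hw hvi hwi hva hN (hp ▸ hNc)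
  obtain ⟨q₂, h₂⟩ := exists_integral_max_sub_max_le_gainFromTrade hindep hv hw hvi hwi hwa hN hNc
  obtain ⟨q, hq⟩ := exists_add_le_mul_of_le_mul (by positivity) (by positivity) h₁ h₂
  refine ⟨q, ?_⟩
  rw [integral_ite_sub_eq_add hv hw hvi hwi p, ← hNceil]
  exact hq.trans_eq (by unfold gainFromTrade; ring)

theorem stmt2 {Ω : Type*} [MeasurableSpace Ω] (μ : Measure Ω) [IsProbabilityMeasure μ]
    (v w : Ω → ℝ) (hv : Measurable v) (hw : Measurable w)
    (hvi : Integrable v μ) (hwi : Integrable w μ)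
    (hvnn : ∀ ω, 0 ≤ v ω) (hwnn : ∀ ω, 0 ≤ w ω)
    (hva : ∀ x : ℝ, μ {ω | v ω = x} = 0) (hwa : ∀ x : ℝ, μ {ω | w ω = x} = 0)
    (hindep : IndepFun v w μ)
    (r : ℝ) (hr : r = (μ {ω | w ω ≤ v ω}).toReal) (hrpos : 0 < r) :
    ∃ p : ℝ,
      ∫ ω, (if w ω ≤ v ω then v ω - w ω else 0) ∂μ ≤
        4 * (⌈Real.logb 2 (2 / r)⌉ : ℝ) *
          ∫ ω, (if w ω ≤ p ∧ p ≤ v ω then v ω - w ω else 0) ∂μ :=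
  stmt2_general μ v w hv hw hvi hwi hva hwa hindep r hr hrpos
end

section
/- Let v and w be independent, integrable, real-valued random variables on a probability space, let p be a real number, and let q = min(P[v ≥ p], P[w ≤ p]). Then q · E[(v − w)·1(w ≤ v ∧ v < p)] ≤ (1 − q) · E[(p − w)·1(w ≤ p ∧ p ≤ v)]. -/
/-!
By independence, both sides factor through the expected seller surplus `C = E[(p - w)⁺]`.
On `{w ≤ p ≤ v}` the integrand is `(p - w)⁺` restricted to `{p ≤ v}`, so the right-hand integral is
`a * C` with `a = P[v ≥ p]`; on `{w ≤ v < p}` we have `v - w ≤ p - w`, so the left-hand integral is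
at most `(1 - a) * C`. Since `0 ≤ q ≤ a`, we get `q (1 - a) ≤ (1 - q) a`.
-/

open MeasureTheory ProbabilityTheory Set

theorem ProbabilityTheory.IndepFun.integral_indicator_preimage_mul
    {Ω β γ : Type*} [MeasurableSpace Ω] [MeasurableSpace β] [MeasurableSpace γ]
    {μ : Measure Ω} {X : Ω → β} {Y : Ω → γ} (hXY : IndepFun X Y μ)
    (hX : Measurable X) (hY : AEMeasurable Y μ) {s : Set β} (hs : MeasurableSet s)
    {g : γ → ℝ} (hg : AEStronglyMeasurable g (μ.map Y)) :
    ∫ ω, (X ⁻¹' s).indicator (g ∘ Y) ω ∂μ = μ.real (X ⁻¹' s) * ∫ ω, g (Y ω) ∂μ := by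
  have hsplit : (X ⁻¹' s).indicator (g ∘ Y) = (s.indicator 1 ∘ X) * (g ∘ Y) := by
    ext ω; by_cases h : X ω ∈ s <;> simp [h]
  rw [hsplit, hXY.integral_comp_mul_comp (f := s.indicator 1) hX.aemeasurable hY
    (aestronglyMeasurable_one.indicator hs) hg]
  simp_rw [Function.comp_apply, ← indicator_comp_right, Pi.one_comp,
    integral_indicator_one (hX hs)]

section BilateralTrade

variable {Ω : Type*} [MeasurableSpace Ω] {μ : Measure Ω} {v w : Ω → ℝ}

theorem integral_seller_surplus_eq (hindep : IndepFun v w μ) (hv : Measurable v)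
    (hw : AEMeasurable w μ) (p : ℝ) :
    ∫ ω, (if w ω ≤ p ∧ p ≤ v ω then p - w ω else 0) ∂μ =
      μ.real (v ⁻¹' Ici p) * ∫ ω, max (p - w ω) 0 ∂μ := by
  rw [← hindep.integral_indicator_preimage_mul hv hw measurableSet_Ici
    (g := fun x => max (p - x) 0) (by fun_prop)]
  congr 1; ext ω
  by_cases hpv : p ≤ v ω <;> by_cases hwp : w ω ≤ p <;> simp [hpv, hwp, le_of_not_ge]

theorem integral_missed_gain_le [IsFiniteMeasure μ] (hindep : IndepFun v w μ) (hv : Measurable v)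
    (hwi : Integrable w μ) (p : ℝ) :
    ∫ ω, (if w ω ≤ v ω ∧ v ω < p then v ω - w ω else 0) ∂μ ≤
      μ.real (v ⁻¹' Iio p) * ∫ ω, max (p - w ω) 0 ∂μ := by
  rw [← hindep.integral_indicator_preimage_mul hv hwi.aemeasurable measurableSet_Iio
    (g := fun x => max (p - x) 0) (by fun_prop)]
  refine integral_mono_of_nonneg (ae_of_all _ fun ω => ?_)
    ((((integrable_const p).sub hwi).pos_part).indicator (hv measurableSet_Iio))
    (ae_of_all _ fun ω => ?_)
  · dsimp only [Pi.zero_apply]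
    split_ifs with h
    exacts [sub_nonneg.2 h.1, le_rfl]
  · dsimp only
    split_ifs with h
    · rw [indicator_of_mem (show ω ∈ v ⁻¹' Iio p from h.2)]
      exact (sub_le_sub_right h.2.le _).trans (le_max_left _ _)
    · exact indicator_nonneg (fun _ _ => le_max_right _ _) _

end BilateralTrade

theorem stmt6_general {Ω : Type*} [MeasurableSpace Ω] (μ : Measure Ω) [IsProbabilityMeasure μ]
    (v w : Ω → ℝ) (hv : Measurable v)
    (hwi : Integrable w μ)
    (hindep : IndepFun v w μ) (p : ℝ) (q : ℝ)
    (hq : q = min (μ {ω | p ≤ v ω}).toReal (μ {ω | w ω ≤ p}).toReal) :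
    q * ∫ ω, (if w ω ≤ v ω ∧ v ω < p then v ω - w ω else 0) ∂μ ≤
      (1 - q) * ∫ ω, (if w ω ≤ p ∧ p ≤ v ω then p - w ω else 0) ∂μ := by
  set a := μ.real (v ⁻¹' Ici p)
  set C := ∫ ω, max (p - w ω) 0 ∂μ
  have hcompl : μ.real (v ⁻¹' Iio p) = 1 - a := by
    rw [← compl_Ici, preimage_compl, probReal_compl_eq_one_sub (hv measurableSet_Ici)]
  have hqa : q ≤ a := hq ▸ min_le_left _ _
  have hq0 : 0 ≤ q := hq ▸ le_min ENNReal.toReal_nonneg ENNReal.toReal_nonneg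
  have hC : 0 ≤ C := integral_nonneg fun _ => le_max_right _ _
  have hmissed := integral_missed_gain_le hindep hv hwi p
  rw [hcompl] at hmissed
  rw [integral_seller_surplus_eq hindep hv hwi.aemeasurable p]
  calc q * ∫ ω, (if w ω ≤ v ω ∧ v ω < p then v ω - w ω else 0) ∂μ
      ≤ q * ((1 - a) * C) := mul_le_mul_of_nonneg_left hmissed hq0
    _ = (1 - q) * (a * C) - (a - q) * C := by ring
    _ ≤ (1 - q) * (a * C) := sub_le_self _ (mul_nonneg (sub_nonneg.2 hqa) hC)

theorem stmt6 {Ω : Type*} [MeasurableSpace Ω] (μ : Measure Ω) [IsProbabilityMeasure μ]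
    (v w : Ω → ℝ) (hv : Measurable v) (hw : Measurable w)
    (hvi : Integrable v μ) (hwi : Integrable w μ)
    (hindep : IndepFun v w μ) (p : ℝ) (q : ℝ)
    (hq : q = min (μ {ω | p ≤ v ω}).toReal (μ {ω | w ω ≤ p}).toReal) :
    q * ∫ ω, (if w ω ≤ v ω ∧ v ω < p then v ω - w ω else 0) ∂μ ≤
      (1 - q) * ∫ ω, (if w ω ≤ p ∧ p ≤ v ω then p - w ω else 0) ∂μ :=
  stmt6_general μ v w hv hwi hindep p q hq
end

section
/- Let v and w be independent, integrable, real-valued random variables on a probability space, let p be a real number, and let q = min(P[v ≥ p], P[w ≤ p]). Then q · E[(v − w)·1(p < w ∧ w ≤ v)] ≤ (1 − q) · E[(v − p)·1(w ≤ p ∧ p ≤ v)]. -/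
/-!
Both sides are controlled by the buyer's surplus `G = E[(v - p)⁺]`. On `{p < w ≤ v}` the missed
gain `v - w` is at most `(v - p)⁺`, so by independence the left expectation is at most
`P[w > p] · G`, while the right expectation is exactly `P[w ≤ p] · G`. Since `q ≤ b := P[w ≤ p]`,
the claim reduces to `q (1 - b) ≤ (1 - q) b`.
-/

open MeasureTheory ProbabilityTheory Set

namespace ProbabilityTheory

variable {Ω α β : Type*} {mΩ : MeasurableSpace Ω} {mα : MeasurableSpace α}
  {mβ : MeasurableSpace β} {μ : Measure Ω}

lemma IndepFun.setIntegral_preimage_eq_mul {X : Ω → α} {Y : Ω → β} (hXY : IndepFun X Y μ)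
    (hX : AEMeasurable X μ) (hY : Measurable Y) {f : α → ℝ}
    (hf : AEStronglyMeasurable f (μ.map X)) {s : Set β} (hs : MeasurableSet s) :
    ∫ ω in Y ⁻¹' s, f (X ω) ∂μ = μ.real (Y ⁻¹' s) * ∫ ω, f (X ω) ∂μ :=
  ((IndepFun_iff_Indep _ _ _).1 hXY).symm.setIntegral_eq_mul hY.comap_le hX ⟨s, hs, rfl⟩ hf

end ProbabilityTheory

lemma ite_and_sub_eq_indicator_posPart (v w p : ℝ) :
    (if w ≤ p ∧ p ≤ v then v - p else 0) = (Iic p).indicator (fun _ ↦ (v - p)⁺) w := by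
  by_cases hv : p ≤ v
  · simp [indicator_apply, hv]
  · simp [indicator_apply, hv, posPart_eq_zero.2 (sub_nonpos.2 (le_of_not_ge hv))]

lemma ite_and_sub_le_indicator_posPart (v w p : ℝ) :
    (if p < w ∧ w ≤ v then v - w else 0) ≤ (Ioi p).indicator (fun _ ↦ (v - p)⁺) w := by
  split_ifs with h
  · rw [indicator_of_mem (mem_Ioi.2 h.1)]
    exact (sub_le_sub_left h.1.le v).trans (le_posPart _)
  · exact indicator_nonneg (fun _ _ ↦ posPart_nonneg _) w

theorem stmt7_general {Ω : Type*} [MeasurableSpace Ω] (μ : Measure Ω) [IsProbabilityMeasure μ]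
    (v w : Ω → ℝ) (hw : Measurable w)
    (hvi : Integrable v μ)
    (hindep : IndepFun v w μ) (p : ℝ) (q : ℝ)
    (hq : q = min (μ {ω | p ≤ v ω}).toReal (μ {ω | w ω ≤ p}).toReal) :
    q * ∫ ω, (if p < w ω ∧ w ω ≤ v ω then v ω - w ω else 0) ∂μ ≤
      (1 - q) * ∫ ω, (if w ω ≤ p ∧ p ≤ v ω then v ω - p else 0) ∂μ := by
  set G := ∫ ω, (v ω - p)⁺ ∂μ
  set b := μ.real (w ⁻¹' Iic p)
  have hf : AEStronglyMeasurable (fun x : ℝ ↦ (x - p)⁺) (μ.map v) := by fun_prop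
  have hG : 0 ≤ G := integral_nonneg fun ω ↦ posPart_nonneg _
  have hrealized : ∫ ω, (if w ω ≤ p ∧ p ≤ v ω then v ω - p else 0) ∂μ = b * G := by
    rw [← hindep.setIntegral_preimage_eq_mul hvi.aemeasurable hw hf measurableSet_Iic,
      ← integral_indicator (hw measurableSet_Iic)]
    simp_rw [ite_and_sub_eq_indicator_posPart]
    rfl
  have hmissed : ∫ ω, (if p < w ω ∧ w ω ≤ v ω then v ω - w ω else 0) ∂μ ≤ (1 - b) * G := by
    rw [← probReal_compl_eq_one_sub (hw measurableSet_Iic), ← preimage_compl, compl_Iic,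
      ← hindep.setIntegral_preimage_eq_mul hvi.aemeasurable hw hf measurableSet_Ioi,
      ← integral_indicator (hw measurableSet_Ioi)]
    refine integral_mono_of_nonneg (ae_of_all _ fun ω ↦ ?_)
      ((hvi.sub (integrable_const p)).pos_part.indicator (hw measurableSet_Ioi))
      (ae_of_all _ fun ω ↦ ite_and_sub_le_indicator_posPart (v ω) (w ω) p)
    dsimp only [Pi.zero_apply]
    split_ifs with h
    exacts [sub_nonneg.2 h.2, le_rfl]
  have hqb : q ≤ b := hq ▸ min_le_right _ _
  have hq0 : 0 ≤ q := hq ▸ le_min ENNReal.toReal_nonneg ENNReal.toReal_nonneg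
  rw [hrealized]
  calc _ ≤ q * ((1 - b) * G) := mul_le_mul_of_nonneg_left hmissed hq0
    _ ≤ (1 - q) * (b * G) := by nlinarith

theorem stmt7 {Ω : Type*} [MeasurableSpace Ω] (μ : Measure Ω) [IsProbabilityMeasure μ]
    (v w : Ω → ℝ) (hv : Measurable v) (hw : Measurable w)
    (hvi : Integrable v μ) (hwi : Integrable w μ)
    (hindep : IndepFun v w μ) (p : ℝ) (q : ℝ)
    (hq : q = min (μ {ω | p ≤ v ω}).toReal (μ {ω | w ω ≤ p}).toReal) :
    q * ∫ ω, (if p < w ω ∧ w ω ≤ v ω then v ω - w ω else 0) ∂μ ≤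
      (1 - q) * ∫ ω, (if w ω ≤ p ∧ p ≤ v ω then v ω - p else 0) ∂μ :=
  stmt7_general μ v w hw hvi hindep p q hq
end

section
/- Let v and w be independent real-valued random variables on a probability space whose distributions are atomless, and let z ≤ z' be real numbers with P[v ≥ z'] = (1/2)·P[v ≥ z] > 0 and P[z ≤ w ≤ z'] > 0. Then there exists p ∈ [z, z'] such that P[v ≥ p | v ≥ z] = P[w ≤ p | z ≤ w ≤ z'], and this common value is at least 1/2. -/
/-!
Without atoms, `p ↦ P[v ≥ p | v ≥ z]` is continuous and falls from `1` at `z` to `1/2` at `z'`,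
while `p ↦ P[w ≤ p | z ≤ w ≤ z']` is continuous and rises from `0` at `z` to `1` at `z'`.
By the intermediate value theorem the two curves cross at some `p ∈ [z, z']`, and there the
first one, being antitone, is still at least its value `1/2` at `z'`.
-/

open MeasureTheory ProbabilityTheory Set

namespace ProbabilityTheory

theorem continuous_cdf_s9 (ν : Measure ℝ) [IsProbabilityMeasure ν] [NullSingletonClass ν] :
    Continuous (cdf ν) := by
  refine continuous_iff_continuousAt.2 fun x ↦ ?_
  rw [(monotone_cdf ν).continuousAt_iff_leftLim_eq_rightLim, (cdf ν).rightLim_eq]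
  have hjump : ENNReal.ofReal (cdf ν x - Function.leftLim (cdf ν) x) = 0 := by
    rw [← StieltjesFunction.measure_singleton, measure_cdf, measure_singleton]
  have := (monotone_cdf ν).leftLim_le (le_refl x)
  linarith [ENNReal.ofReal_eq_zero.1 hjump]

variable {Ω : Type*} [MeasurableSpace Ω] {μ : Measure Ω} {X : Ω → ℝ}

theorem nullSingletonClass_map (hX : Measurable X) (hXa : ∀ x, μ {ω | X ω = x} = 0) :
    NullSingletonClass (μ.map X) :=
  ⟨fun x ↦ by rw [Measure.map_apply hX (measurableSet_singleton x)]; exact hXa x⟩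

variable [IsProbabilityMeasure μ]

theorem measure_setOf_le_eq_ofReal_cdf_map (hX : Measurable X) (p : ℝ) :
    μ {ω | X ω ≤ p} = ENNReal.ofReal (cdf (μ.map X) p) := by
  have := Measure.isProbabilityMeasure_map (μ := μ) hX.aemeasurable
  rw [ofReal_cdf, Measure.map_apply hX measurableSet_Iic]
  rfl

theorem measure_setOf_ge_eq_ofReal_one_sub_cdf_map (hX : Measurable X)
    (hXa : ∀ x, μ {ω | X ω = x} = 0) (p : ℝ) :
    μ {ω | p ≤ X ω} = ENNReal.ofReal (1 - cdf (μ.map X) p) := by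
  have := Measure.isProbabilityMeasure_map (μ := μ) hX.aemeasurable
  have := nullSingletonClass_map hX hXa
  rw [ENNReal.ofReal_sub _ (cdf_nonneg _ p), ENNReal.ofReal_one, ofReal_cdf,
    ← prob_compl_eq_one_sub measurableSet_Iic, compl_Iic,
    measure_congr (Ioi_ae_eq_Ici (μ := μ.map X)), Measure.map_apply hX measurableSet_Ici]
  rfl

theorem continuous_measure_setOf_le (hX : Measurable X) (hXa : ∀ x, μ {ω | X ω = x} = 0) :
    Continuous fun p ↦ μ {ω | X ω ≤ p} := by
  have := Measure.isProbabilityMeasure_map (μ := μ) hX.aemeasurable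
  have := nullSingletonClass_map hX hXa
  simp only [measure_setOf_le_eq_ofReal_cdf_map hX]
  exact ENNReal.continuous_ofReal.comp (continuous_cdf_s9 _)

theorem continuous_measure_setOf_ge (hX : Measurable X) (hXa : ∀ x, μ {ω | X ω = x} = 0) :
    Continuous fun p ↦ μ {ω | p ≤ X ω} := by
  have := Measure.isProbabilityMeasure_map (μ := μ) hX.aemeasurable
  have := nullSingletonClass_map hX hXa
  simp only [measure_setOf_ge_eq_ofReal_one_sub_cdf_map hX hXa]
  exact ENNReal.continuous_ofReal.comp (continuous_const.sub (continuous_cdf_s9 _))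

theorem cond_eq_one_of_subset {s t : Set Ω} (hs : μ s ≠ 0) (hst : s ⊆ t) : μ[t|s] = 1 :=
  have := cond_isProbabilityMeasure hs
  prob_le_one.antisymm <| (cond_apply_self hs (measure_ne_top _ _)).symm.trans_le (measure_mono hst)

end ProbabilityTheory

theorem stmt9_general {Ω : Type*} [MeasurableSpace Ω] (μ : Measure Ω) [IsProbabilityMeasure μ]
    (v w : Ω → ℝ) (hv : Measurable v) (hw : Measurable w)
    (hva : ∀ x : ℝ, μ {ω | v ω = x} = 0) (hwa : ∀ x : ℝ, μ {ω | w ω = x} = 0)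
    (z z' : ℝ) (hzz' : z ≤ z')
    (hhalf : μ {ω | z' ≤ v ω} = (1 / 2) * μ {ω | z ≤ v ω})
    (hvpos : 0 < μ {ω | z' ≤ v ω})
    (hwpos : 0 < μ {ω | z ≤ w ω ∧ w ω ≤ z'}) :
    ∃ p ∈ Set.Icc z z',
      μ[|{ω | z ≤ v ω}] {ω | p ≤ v ω} = μ[|{ω | z ≤ w ω ∧ w ω ≤ z'}] {ω | w ω ≤ p} ∧
        (1 / 2 : ENNReal) ≤ μ[|{ω | z ≤ v ω}] {ω | p ≤ v ω} := by
  set A := {ω | z ≤ v ω}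
  set B := {ω | z ≤ w ω ∧ w ω ≤ z'}
  have hAsub : {ω | z' ≤ v ω} ⊆ A := fun ω h ↦ hzz'.trans h
  have hA : μ A ≠ 0 := (hvpos.trans_le (measure_mono hAsub)).ne'
  have := cond_isProbabilityMeasure (s := A) hA
  have := cond_isProbabilityMeasure (s := B) hwpos.ne'
  have hAm : MeasurableSet A := hv measurableSet_Ici
  have hBm : MeasurableSet B := hw measurableSet_Icc
  have hf_right : μ[|A] {ω | z' ≤ v ω} = 1 / 2 := by
    rw [cond_apply hAm, inter_eq_right.2 hAsub, hhalf, mul_left_comm,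
      ENNReal.inv_mul_cancel hA (measure_ne_top _ _), mul_one]
  have hg_left : μ[|B] {ω | w ω ≤ z} = 0 := by
    have hnull : μ (B ∩ {ω | w ω ≤ z}) = 0 :=
      measure_mono_null (fun ω h ↦ le_antisymm h.2 h.1.1) (hwa z)
    rw [cond_apply hBm, hnull, mul_zero]
  have hg_right : μ[|B] {ω | w ω ≤ z'} = 1 := cond_eq_one_of_subset hwpos.ne' fun ω h ↦ h.2
  have hf : Continuous fun p ↦ μ[|A] {ω | p ≤ v ω} :=
    continuous_measure_setOf_ge hv fun x ↦ cond_absolutelyContinuous (hva x)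
  have hg : Continuous fun p ↦ μ[|B] {ω | w ω ≤ p} :=
    continuous_measure_setOf_le hw fun x ↦ cond_absolutelyContinuous (hwa x)
  obtain ⟨p, hp, hgfp⟩ := isPreconnected_Icc.intermediate_value₂
    (left_mem_Icc.2 hzz') (right_mem_Icc.2 hzz') hg.continuousOn hf.continuousOn
    (hg_left ▸ zero_le) (by rw [hf_right, hg_right]; exact ENNReal.half_le_self)
  exact ⟨p, hp, hgfp.symm, hf_right ▸ measure_mono fun ω h ↦ hp.2.trans h⟩

theorem stmt9 {Ω : Type*} [MeasurableSpace Ω] (μ : Measure Ω) [IsProbabilityMeasure μ]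
    (v w : Ω → ℝ) (hv : Measurable v) (hw : Measurable w)
    (hva : ∀ x : ℝ, μ {ω | v ω = x} = 0) (hwa : ∀ x : ℝ, μ {ω | w ω = x} = 0)
    (hindep : IndepFun v w μ)
    (z z' : ℝ) (hzz' : z ≤ z')
    (hhalf : μ {ω | z' ≤ v ω} = (1 / 2) * μ {ω | z ≤ v ω})
    (hvpos : 0 < μ {ω | z' ≤ v ω})
    (hwpos : 0 < μ {ω | z ≤ w ω ∧ w ω ≤ z'}) :
    ∃ p ∈ Set.Icc z z',
      μ[|{ω | z ≤ v ω}] {ω | p ≤ v ω} = μ[|{ω | z ≤ w ω ∧ w ω ≤ z'}] {ω | w ω ≤ p} ∧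
        (1 / 2 : ENNReal) ≤ μ[|{ω | z ≤ v ω}] {ω | p ≤ v ω} :=
  stmt9_general μ v w hv hw hva hwa z z' hzz' hhalf hvpos hwpos
end

section
/- Let X be an integrable real-valued random variable on a probability space, let t be a real number, and let A be a measurable event with P[A] = P[X ≥ t]. Then E[X·1_A] ≤ E[X·1(X ≥ t)]. -/
/-! Swapping `A \ B` for `B \ A`, where `B = {t ≤ X}`, exchanges two events of equal
probability, on the first of which `X < t` and on the second `t ≤ X`; so the swap cannot
decrease the integral. -/

open MeasureTheory
open scoped ENNReal

section

variable {α : Type*} [MeasurableSpace α] {μ : Measure α} {s t : Set α}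

theorem measureReal_sdiff_eq_measureReal_sdiff (hs : NullMeasurableSet s μ)
    (ht : NullMeasurableSet t μ) (hst : μ s = μ t) (hμt : μ t ≠ ∞) :
    μ.real (s \ t) = μ.real (t \ s) := by
  have hs_split := measureReal_inter_add_sdiff₀ ht (hst ▸ hμt : μ s ≠ ∞)
  have ht_split := measureReal_inter_add_sdiff₀ hs hμt
  have hst_real : μ.real s = μ.real t := by simp only [measureReal_def, hst]
  rw [Set.inter_comm] at ht_split
  linarith

theorem setIntegral_le_of_le_const_real {f : α → ℝ} {c : ℝ} (hs : MeasurableSet s)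
    (hμs : μ s ≠ ∞) (hf : ∀ x ∈ s, f x ≤ c) (hfs : IntegrableOn f s μ) :
    ∫ x in s, f x ∂μ ≤ c * μ.real s := by
  have := setIntegral_ge_of_const_le_real hs hμs (fun x hx => neg_le_neg (hf x hx)) hfs.neg
  rw [integral_neg] at this
  linarith

theorem setIntegral_le_setIntegral_of_measure_eq {f : α → ℝ} {c : ℝ} (hs : MeasurableSet s)
    (ht : MeasurableSet t) (hst : μ s = μ t) (hμt : μ t ≠ ∞)
    (hfs : IntegrableOn f s μ) (hft : IntegrableOn f t μ)
    (hf_lo : ∀ x ∈ s \ t, f x ≤ c) (hf_hi : ∀ x ∈ t \ s, c ≤ f x) :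
    ∫ x in s, f x ∂μ ≤ ∫ x in t, f x ∂μ := by
  have hμs : μ s ≠ ∞ := hst ▸ hμt
  calc ∫ x in s, f x ∂μ = ∫ x in s ∩ t, f x ∂μ + ∫ x in s \ t, f x ∂μ :=
        (integral_inter_add_sdiff ht hfs).symm
    _ ≤ ∫ x in s ∩ t, f x ∂μ + c * μ.real (s \ t) := by
        gcongr
        exact setIntegral_le_of_le_const_real (hs.diff ht)
          (measure_ne_top_of_subset Set.sdiff_subset hμs) hf_lo (hfs.mono_set Set.sdiff_subset)
    _ = ∫ x in t ∩ s, f x ∂μ + c * μ.real (t \ s) := by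
        rw [Set.inter_comm, measureReal_sdiff_eq_measureReal_sdiff hs.nullMeasurableSet
          ht.nullMeasurableSet hst hμt]
    _ ≤ ∫ x in t ∩ s, f x ∂μ + ∫ x in t \ s, f x ∂μ := by
        gcongr
        exact setIntegral_ge_of_const_le_real (ht.diff hs)
          (measure_ne_top_of_subset Set.sdiff_subset hμt) hf_hi (hft.mono_set Set.sdiff_subset)
    _ = ∫ x in t, f x ∂μ := integral_inter_add_sdiff hs hft

end

theorem stmt10 {Ω : Type*} [MeasurableSpace Ω] (μ : Measure Ω) [IsProbabilityMeasure μ]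
    (X : Ω → ℝ) (hX : Measurable X) (hXi : Integrable X μ)
    (t : ℝ) (A : Set Ω) (hA : MeasurableSet A)
    (hPA : μ A = μ {ω | t ≤ X ω}) :
    ∫ ω in A, X ω ∂μ ≤ ∫ ω in {ω | t ≤ X ω}, X ω ∂μ :=
  setIntegral_le_setIntegral_of_measure_eq hA (measurableSet_le measurable_const hX) hPA
    (measure_ne_top _ _) hXi.integrableOn hXi.integrableOn
    (fun _ hω => (not_le.mp hω.2).le) (fun _ hω => hω.1)
end

section
/- Let X be an integrable real-valued random variable on a probability space, let s be a real number, and let B be a measurable event with P[B] = P[X ≤ s]. Then E[X·1_B] ≥ E[X·1(X ≤ s)]. -/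
open MeasureTheory

section Bathtub

variable {α : Type*} [MeasurableSpace α] {μ : Measure α} {X : α → ℝ} {s : ℝ} {A B : Set α}

lemma setIntegral_le_mul_measureReal_of_le (hA : NullMeasurableSet A μ) (hμA : μ A ≠ ⊤)
    (hXA : IntegrableOn X A μ) (hle : ∀ x ∈ A, X x ≤ s) :
    ∫ x in A, X x ∂μ ≤ s * μ.real A := by
  calc ∫ x in A, X x ∂μ ≤ ∫ _ in A, s ∂μ := setIntegral_mono_on₀ hXA (integrableOn_const hμA) hA hle
    _ = s * μ.real A := by rw [setIntegral_const, smul_eq_mul, mul_comm]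

lemma mul_measureReal_le_setIntegral_of_le (hA : NullMeasurableSet A μ) (hμA : μ A ≠ ⊤)
    (hXA : IntegrableOn X A μ) (hge : ∀ x ∈ A, s ≤ X x) :
    s * μ.real A ≤ ∫ x in A, X x ∂μ := by
  calc s * μ.real A = ∫ _ in A, s ∂μ := by rw [setIntegral_const, smul_eq_mul, mul_comm]
    _ ≤ ∫ x in A, X x ∂μ := setIntegral_mono_on₀ (integrableOn_const hμA) hXA hA hge

/-- Bathtub principle. Both integrals share the part over `A ∩ B`; the remaining pieces `A \ B`
and `B \ A` have equal measure, and `X ≤ s` on the first while `s ≤ X` on the second. -/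
theorem setIntegral_le_setIntegral_of_measure_eq_s11 (hA : NullMeasurableSet A μ)
    (hB : NullMeasurableSet B μ) (hμ : μ A = μ B) (hμA : μ A ≠ ⊤)
    (hXA : IntegrableOn X A μ) (hXB : IntegrableOn X B μ)
    (hle : ∀ x ∈ A, X x ≤ s) (hge : ∀ x ∉ A, s ≤ X x) :
    ∫ x in A, X x ∂μ ≤ ∫ x in B, X x ∂μ := by
  have hμB : μ B ≠ ⊤ := hμ ▸ hμA
  have hdiff : μ.real (A \ B) = μ.real (B \ A) := by
    rw [measureReal_def, measureReal_def,
      measure_sdiff_symm hA hB hμ (measure_ne_top_of_subset Set.inter_subset_left hμA)]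
  rw [← integral_inter_add_sdiff₀ hB hXA, ← integral_inter_add_sdiff₀ hA hXB, Set.inter_comm B A]
  gcongr ∫ x in A ∩ B, X x ∂μ + ?_
  calc ∫ x in A \ B, X x ∂μ ≤ s * μ.real (A \ B) :=
        setIntegral_le_mul_measureReal_of_le (hA.diff hB)
          (measure_ne_top_of_subset Set.sdiff_subset hμA) (hXA.mono_set Set.sdiff_subset)
          fun x hx => hle x hx.1
    _ = s * μ.real (B \ A) := by rw [hdiff]
    _ ≤ ∫ x in B \ A, X x ∂μ :=
        mul_measureReal_le_setIntegral_of_le (hB.diff hA)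
          (measure_ne_top_of_subset Set.sdiff_subset hμB) (hXB.mono_set Set.sdiff_subset)
          fun x hx => hge x hx.2

end Bathtub

theorem stmt11_general {Ω : Type*} [MeasurableSpace Ω] (μ : Measure Ω) [IsProbabilityMeasure μ]
    (X : Ω → ℝ) (hXi : Integrable X μ)
    (s : ℝ) (B : Set Ω) (hB : MeasurableSet B)
    (hPB : μ B = μ {ω | X ω ≤ s}) :
    ∫ ω in {ω | X ω ≤ s}, X ω ∂μ ≤ ∫ ω in B, X ω ∂μ :=
  setIntegral_le_setIntegral_of_measure_eq_s11
    (hXi.aemeasurable.nullMeasurableSet_preimage measurableSet_Iic) hB.nullMeasurableSet hPB.symm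
    (measure_ne_top μ _) hXi.integrableOn hXi.integrableOn (fun _ hx => hx)
    fun _ hx => (not_le.mp hx).le

theorem stmt11 {Ω : Type*} [MeasurableSpace Ω] (μ : Measure Ω) [IsProbabilityMeasure μ]
    (X : Ω → ℝ) (hX : Measurable X) (hXi : Integrable X μ)
    (s : ℝ) (B : Set Ω) (hB : MeasurableSet B)
    (hPB : μ B = μ {ω | X ω ≤ s}) :
    ∫ ω in {ω | X ω ≤ s}, X ω ∂μ ≤ ∫ ω in B, X ω ∂μ :=
  stmt11_general μ X hXi s B hB hPB
end

section
/- Let F̄ : ℝ → ℝ be an antitone function and G : ℝ → ℝ a monotone (nondecreasing) function, let n, m be positive reals, and let p̄, pᴮ, pˢ, qᴮ, qˢ be reals satisfying: n·F̄(p̄) = m·G(p̄); F̄(pᴮ) = qᴮ; G(pˢ) = qˢ; n·qᴮ = m·qˢ; and the minimality conditions that F̄(p̄) = qᴮ implies pᴮ = p̄, and G(p̄) = qˢ implies pˢ = p̄. Then either (pᴮ ≥ p̄ and p̄ ≥ pˢ) or (pˢ ≥ p̄ and p̄ ≥ pᴮ). -/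
/-!
Balancing `n F̄(p̄) = m G(p̄)` and `n qᴮ = m qˢ` means that `qᴮ` lies below `F̄(p̄)` exactly when
`qˢ` lies below `G(p̄)`. If so, monotonicity puts `pᴮ` above `p̄` and `pˢ` below it; the reverse
strict inequality is symmetric, and in the equality case both prices equal `p̄` by minimality.
-/

lemma lt_iff_lt_of_mul_eq_mul {α : Type*} [Mul α] [Zero α] [Preorder α] [PosMulStrictMono α]
    [PosMulReflectLT α] {n m a b a' b' : α} (hn : 0 < n) (hm : 0 < m)
    (h : n * a = m * b) (h' : n * a' = m * b') : a' < a ↔ b' < b := by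
  rw [← mul_lt_mul_iff_right₀ hn, h, h', mul_lt_mul_iff_right₀ hm]

theorem stmt12 (Fbar G : ℝ → ℝ) (hF : Antitone Fbar) (hG : Monotone G)
    (n m : ℝ) (hn : 0 < n) (hm : 0 < m)
    (pbar pB pS qB qS : ℝ)
    (hbal : n * Fbar pbar = m * G pbar)
    (hqB : Fbar pB = qB) (hqS : G pS = qS)
    (hopt : n * qB = m * qS)
    (hminB : Fbar pbar = qB → pB = pbar)
    (hminS : G pbar = qS → pS = pbar) :
    (pB ≥ pbar ∧ pbar ≥ pS) ∨ (pS ≥ pbar ∧ pbar ≥ pB) := by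
  subst hqB hqS
  rcases lt_trichotomy (Fbar pB) (Fbar pbar) with hB | hB | hB
  · have hS : G pS < G pbar := (lt_iff_lt_of_mul_eq_mul hn hm hbal hopt).1 hB
    exact Or.inl ⟨(hF.reflect_lt hB).le, (hG.reflect_lt hS).le⟩
  · have hS : G pbar = G pS := mul_left_cancel₀ hm.ne' (by rw [← hbal, ← hB, hopt])
    exact Or.inl ⟨(hminB hB.symm).ge, (hminS hS).le⟩
  · have hS : G pbar < G pS := (lt_iff_lt_of_mul_eq_mul hn hm hopt hbal).1 hB
    exact Or.inr ⟨(hG.reflect_lt hS).le, (hF.reflect_lt hB).le⟩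
end

section
/- Let v and w be integrable real-valued random variables on a probability space, let n, m be positive reals, and let p̄, pᴮ, pˢ be reals such that either (pᴮ ≥ p̄ and p̄ ≥ pˢ) or (pˢ ≥ p̄ and p̄ ≥ pᴮ). Assume n·P[v ≥ p̄] = m·P[w ≤ p̄] and n·P[v ≥ pᴮ] = m·P[w ≤ pˢ]. Then n·E[v·1(v ≥ pᴮ)] − m·E[w·1(w ≤ pˢ)] ≤ n·E[v·1(v ≥ p̄)] − m·E[w·1(w ≤ p̄)]. -/
/-!
For every real `x` and all prices `p, q`, `(x - p) * (1[q ≤ x] - 1[p ≤ x]) ≤ 0`, whatever the order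
of `p` and `q`. Integrating, moving the buyers' threshold from `p̄` to `pᴮ` changes
`E[v·1(v ≥ ·)]` by at most `p̄` times the change of `P[v ≥ ·]`; symmetrically, moving the sellers'
threshold from `p̄` to `pˢ` changes `E[w·1(w ≤ ·)]` by at least `p̄` times the change of
`P[w ≤ ·]`. The two balance conditions say that these probability changes agree once weighted by
`n` and `m`, so the two bounds cancel.
-/

open MeasureTheory ProbabilityTheory

section Truncation

variable {Ω : Type*} [MeasurableSpace Ω] {μ : Measure Ω} [IsFiniteMeasure μ]

theorem integral_indicator_sub_integral_indicator_le {f : Ω → ℝ} (hf : Integrable f μ)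
    {s t : Set Ω} (hs : NullMeasurableSet s μ) (ht : NullMeasurableSet t μ) {c : ℝ}
    (hst : ∀ ω ∈ s \ t, f ω ≤ c) (hts : ∀ ω ∈ t \ s, c ≤ f ω) :
    ∫ ω, s.indicator f ω ∂μ - ∫ ω, t.indicator f ω ∂μ ≤ c * (μ.real s - μ.real t) := by
  have hc : Integrable (fun _ : Ω => c) μ := integrable_const c
  calc ∫ ω, s.indicator f ω ∂μ - ∫ ω, t.indicator f ω ∂μ
      = ∫ ω, (s.indicator f ω - t.indicator f ω) ∂μ :=
        (integral_sub (hf.indicator₀ hs) (hf.indicator₀ ht)).symm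
    _ ≤ ∫ ω, (s.indicator (fun _ => c) ω - t.indicator (fun _ => c) ω) ∂μ := by
        refine integral_mono ((hf.indicator₀ hs).sub (hf.indicator₀ ht))
          ((hc.indicator₀ hs).sub (hc.indicator₀ ht)) fun ω => ?_
        by_cases hωs : ω ∈ s <;> by_cases hωt : ω ∈ t <;>
          simp [hωs, hωt, hst ω, hts ω]
    _ = c * (μ.real s - μ.real t) := by
        rw [integral_sub (hc.indicator₀ hs) (hc.indicator₀ ht), integral_indicator₀ hs,
          integral_indicator₀ ht, setIntegral_const, setIntegral_const, smul_eq_mul,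
          smul_eq_mul]
        ring

theorem le_integral_indicator_sub_integral_indicator {f : Ω → ℝ} (hf : Integrable f μ)
    {s t : Set Ω} (hs : NullMeasurableSet s μ) (ht : NullMeasurableSet t μ) {c : ℝ}
    (hst : ∀ ω ∈ s \ t, c ≤ f ω) (hts : ∀ ω ∈ t \ s, f ω ≤ c) :
    c * (μ.real s - μ.real t) ≤ ∫ ω, s.indicator f ω ∂μ - ∫ ω, t.indicator f ω ∂μ := by
  have := integral_indicator_sub_integral_indicator_le hf.neg hs ht (c := -c)
    (fun ω hω => neg_le_neg (hst ω hω)) (fun ω hω => neg_le_neg (hts ω hω))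
  simp only [Set.indicator_neg', Pi.neg_apply, integral_neg] at this
  linarith

theorem integral_ite_le_sub_le {v : Ω → ℝ} (hv : Integrable v μ) (p q : ℝ) :
    ∫ ω, (if q ≤ v ω then v ω else 0) ∂μ - ∫ ω, (if p ≤ v ω then v ω else 0) ∂μ ≤
      p * (μ.real {ω | q ≤ v ω} - μ.real {ω | p ≤ v ω}) := by
  have hmeas (r : ℝ) : NullMeasurableSet {ω | r ≤ v ω} μ :=
    nullMeasurableSet_le aemeasurable_const hv.aemeasurable
  simpa only [Set.indicator_apply, Set.mem_ofPred_eq] using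
    integral_indicator_sub_integral_indicator_le hv (hmeas q) (hmeas p)
      (fun ω hω => le_of_not_ge hω.2) (fun ω hω => hω.1)

theorem le_integral_ite_le_sub {w : Ω → ℝ} (hw : Integrable w μ) (p q : ℝ) :
    p * (μ.real {ω | w ω ≤ q} - μ.real {ω | w ω ≤ p}) ≤
      ∫ ω, (if w ω ≤ q then w ω else 0) ∂μ - ∫ ω, (if w ω ≤ p then w ω else 0) ∂μ := by
  have hmeas (r : ℝ) : NullMeasurableSet {ω | w ω ≤ r} μ :=
    nullMeasurableSet_le hw.aemeasurable aemeasurable_const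
  simpa only [Set.indicator_apply, Set.mem_ofPred_eq] using
    le_integral_indicator_sub_integral_indicator hw (hmeas q) (hmeas p)
      (fun ω hω => le_of_not_ge hω.2) (fun ω hω => hω.1)

end Truncation

theorem stmt13_general {Ω : Type*} [MeasurableSpace Ω] (μ : Measure Ω) [IsProbabilityMeasure μ]
    (v w : Ω → ℝ)
    (hvi : Integrable v μ) (hwi : Integrable w μ)
    (n m : ℝ) (hn : 0 < n) (hm : 0 < m)
    (pbar pB pS : ℝ)
    (h1 : n * (μ {ω | pbar ≤ v ω}).toReal = m * (μ {ω | w ω ≤ pbar}).toReal)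
    (h2 : n * (μ {ω | pB ≤ v ω}).toReal = m * (μ {ω | w ω ≤ pS}).toReal) :
    n * (∫ ω, (if pB ≤ v ω then v ω else 0) ∂μ) -
        m * (∫ ω, (if w ω ≤ pS then w ω else 0) ∂μ) ≤
      n * (∫ ω, (if pbar ≤ v ω then v ω else 0) ∂μ) -
        m * (∫ ω, (if w ω ≤ pbar then w ω else 0) ∂μ) := by
  simp only [← measureReal_def] at h1 h2
  have hbuyers := mul_le_mul_of_nonneg_left (integral_ite_le_sub_le hvi pbar pB) hn.le
  have hsellers := mul_le_mul_of_nonneg_left (le_integral_ite_le_sub hwi pbar pS) hm.le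
  linear_combination hbuyers + hsellers + pbar * (h2 - h1)

theorem stmt13 {Ω : Type*} [MeasurableSpace Ω] (μ : Measure Ω) [IsProbabilityMeasure μ]
    (v w : Ω → ℝ) (hv : Measurable v) (hw : Measurable w)
    (hvi : Integrable v μ) (hwi : Integrable w μ)
    (n m : ℝ) (hn : 0 < n) (hm : 0 < m)
    (pbar pB pS : ℝ)
    (horder : (pB ≥ pbar ∧ pbar ≥ pS) ∨ (pS ≥ pbar ∧ pbar ≥ pB))
    (h1 : n * (μ {ω | pbar ≤ v ω}).toReal = m * (μ {ω | w ω ≤ pbar}).toReal)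
    (h2 : n * (μ {ω | pB ≤ v ω}).toReal = m * (μ {ω | w ω ≤ pS}).toReal) :
    n * (∫ ω, (if pB ≤ v ω then v ω else 0) ∂μ) -
        m * (∫ ω, (if w ω ≤ pS then w ω else 0) ∂μ) ≤
      n * (∫ ω, (if pbar ≤ v ω then v ω else 0) ∂μ) -
        m * (∫ ω, (if w ω ≤ pbar then w ω else 0) ∂μ) :=
  stmt13_general μ v w hvi hwi n m hn hm pbar pB pS h1 h2
end

section
/- For all natural numbers N, p, w with 1 ≤ w ≤ p ≤ N and every real number ε ≥ 5/36: Σ_{v=p}^{N} (v + ε − w)·10^(w−v) ≤ 2·(p + ε − w)·10^(w−p), where the sum is over the reals and 10^(w−v) denotes the real power 10^w / 10^v. -/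
open Finset

theorem sum_range_add_mul_geometric_le {a r : ℝ} (ha : 0 ≤ a) (hr₀ : 0 ≤ r) (hr₁ : r < 1)
    (n : ℕ) :
    ∑ k ∈ range n, (a + k) * r ^ k ≤ a * (1 - r)⁻¹ + r / (1 - r) ^ 2 := by
  have hsum : HasSum (fun k : ℕ ↦ (a + k) * r ^ k) (a * (1 - r)⁻¹ + r / (1 - r) ^ 2) := by
    simpa only [add_mul, mul_assoc] using
      ((hasSum_geometric_of_lt_one hr₀ hr₁).mul_left a).add
        (hasSum_coe_mul_geometric_of_norm_lt_one (by rwa [Real.norm_of_nonneg hr₀]))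
  exact sum_le_hasSum _ (fun k _ ↦ by positivity) hsum

/-- `5 / 36` is exactly the threshold at which the full series `10 a / 9 + 10 / 81` equals `2 a`. -/
theorem sum_range_add_mul_tenth_pow_le {a : ℝ} (ha : 5 / 36 ≤ a) (n : ℕ) :
    ∑ k ∈ range n, (a + k) * (1 / 10 : ℝ) ^ k ≤ 2 * a := by
  have := sum_range_add_mul_geometric_le (by linarith) (by norm_num : (0 : ℝ) ≤ 1 / 10)
    (by norm_num) n
  norm_num at this ⊢
  linarith

theorem stmt15_general (N p w : ℕ) (hwp : w ≤ p)
    (ε : ℝ) (hε : 5 / 36 ≤ ε) :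
    ∑ v ∈ Finset.Icc p N, ((v : ℝ) + ε - (w : ℝ)) * ((10 : ℝ) ^ w / (10 : ℝ) ^ v) ≤
      2 * ((p : ℝ) + ε - (w : ℝ)) * ((10 : ℝ) ^ w / (10 : ℝ) ^ p) := by
  set a : ℝ := p + ε - w
  set C : ℝ := 10 ^ w / 10 ^ p
  have ha : 5 / 36 ≤ a := by
    have : (w : ℝ) ≤ p := by exact_mod_cast hwp
    linarith
  have hterm (k : ℕ) :
      ((↑(p + k) : ℝ) + ε - w) * (10 ^ w / 10 ^ (p + k)) = (a + k) * (1 / 10 : ℝ) ^ k * C := by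
    simp only [a, C, pow_add, one_div, inv_pow]
    push_cast
    field_simp
    ring
  rw [← Finset.Ico_add_one_right_eq_Icc, sum_Ico_eq_sum_range]
  calc ∑ k ∈ range (N + 1 - p), ((↑(p + k) : ℝ) + ε - w) * (10 ^ w / 10 ^ (p + k))
      = (∑ k ∈ range (N + 1 - p), (a + k) * (1 / 10 : ℝ) ^ k) * C := by
        simp only [hterm, sum_mul]
    _ ≤ 2 * a * C := by gcongr; exact sum_range_add_mul_tenth_pow_le ha _

theorem stmt15 (N p w : ℕ) (hw : 1 ≤ w) (hwp : w ≤ p) (hpN : p ≤ N)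
    (ε : ℝ) (hε : 5 / 36 ≤ ε) :
    ∑ v ∈ Finset.Icc p N, ((v : ℝ) + ε - (w : ℝ)) * ((10 : ℝ) ^ w / (10 : ℝ) ^ v) ≤
      2 * ((p : ℝ) + ε - (w : ℝ)) * ((10 : ℝ) ^ w / (10 : ℝ) ^ p) :=
  stmt15_general N p w hwp ε hε
end

section
/- Fix a natural number N ≥ 1 and a real number ε with 5/36 ≤ ε < 1. Define OPT = Σ_{w=1}^{N} Σ_{v=w}^{N} (v + ε − w)·10^(w−v) and, for a real number p, GFT(p) = Σ_{w=1}^{N} Σ_{v=1}^{N} 1(w ≤ p ∧ p ≤ v + ε)·(v + ε − w)·10^(w−v), all sums over the reals with 10^(w−v) = 10^w / 10^v. Then for every real p: N·GFT(p) ≤ 4·OPT. -/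
/-!
Every diagonal pair `w = v` contributes `ε` to OPT, so `OPT ≥ N ε`; it remains to show
`GFT(p) ≤ 4 ε`. A pair `(w, v)` trades at price `p` only if `w ≤ a := ⌊p⌋` and `v ≥ b := ⌈p - ε⌉`,
and `a ≤ b ≤ a + 1`. Writing `i = a - w`, `j = v - b`, its gain is
`10^(a-b) (b - a + ε + i + j) 10^(-i) 10^(-j)`, and summing over all `i, j ≥ 0` gives
`10^(a-b) ((b - a + ε) (10/9)^2 + 2 (1/10) (10/9)^3)`, which is at most `4 ε` in both cases
`b = a` and `b = a + 1` as soon as `ε ≥ 5/36`.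
-/

open Finset

section Geometric

variable {r : ℝ}

lemma sum_pow_le_of_lt_one (hr₀ : 0 ≤ r) (hr₁ : r < 1) (s : Finset ℕ) :
    ∑ i ∈ s, r ^ i ≤ (1 - r)⁻¹ :=
  sum_le_hasSum s (fun i _ => by positivity) (hasSum_geometric_of_lt_one hr₀ hr₁)

lemma sum_mul_pow_le_of_lt_one (hr₀ : 0 ≤ r) (hr₁ : r < 1) (s : Finset ℕ) :
    ∑ i ∈ s, (i : ℝ) * r ^ i ≤ r / (1 - r) ^ 2 :=
  sum_le_hasSum s (fun i _ => by positivity)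
    (hasSum_coe_mul_geometric_of_norm_lt_one (by rwa [Real.norm_of_nonneg hr₀]))

lemma sum_sum_add_mul_pow_mul_pow_le (hr₀ : 0 ≤ r) (hr₁ : r < 1) {c : ℝ} (hc : 0 ≤ c)
    (I J : Finset ℕ) :
    ∑ i ∈ I, ∑ j ∈ J, (c + i + j) * (r ^ i * r ^ j) ≤
      c / (1 - r) ^ 2 + 2 * r / (1 - r) ^ 3 := by
  have hsplit : ∑ i ∈ I, ∑ j ∈ J, (c + i + j) * (r ^ i * r ^ j) =
      c * ((∑ i ∈ I, r ^ i) * ∑ j ∈ J, r ^ j) + (∑ i ∈ I, (i : ℝ) * r ^ i) * ∑ j ∈ J, r ^ j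
        + (∑ i ∈ I, r ^ i) * ∑ j ∈ J, (j : ℝ) * r ^ j := by
    rw [sum_mul_sum, sum_mul_sum, sum_mul_sum, mul_sum]
    simp only [mul_sum, ← sum_add_distrib]
    exact sum_congr rfl fun i _ => sum_congr rfl fun j _ => by ring
  have h1r : 0 < 1 - r := by linarith
  calc _ = _ := hsplit
    _ ≤ c * ((1 - r)⁻¹ * (1 - r)⁻¹) + r / (1 - r) ^ 2 * (1 - r)⁻¹
          + (1 - r)⁻¹ * (r / (1 - r) ^ 2) := by
      gcongr
      all_goals first
        | exact sum_pow_le_of_lt_one hr₀ hr₁ _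
        | exact sum_mul_pow_le_of_lt_one hr₀ hr₁ _
    _ = c / (1 - r) ^ 2 + 2 * r / (1 - r) ^ 3 := by field_simp; ring

end Geometric

lemma pow_div_pow_eq_mul_inv_pow_mul_inv_pow {K : Type*} [Field K] {q : K} (hq : q ≠ 0)
    {w a b v : ℕ} (hwa : w ≤ a) (hbv : b ≤ v) :
    q ^ w / q ^ v = q ^ a / q ^ b * (q⁻¹ ^ (a - w) * q⁻¹ ^ (v - b)) := by
  obtain ⟨i, rfl⟩ := Nat.exists_eq_add_of_le hwa
  obtain ⟨j, rfl⟩ := Nat.exists_eq_add_of_le hbv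
  simp only [Nat.add_sub_cancel_left, pow_add, inv_pow]
  field_simp

/-- The gain from trade between a seller of value `w` and a buyer of value `v + ε`, weighted by
the probability `10^(w - v)` (up to normalization) of this pair of values. -/
noncomputable def tradeGain (ε : ℝ) (w v : ℕ) : ℝ :=
  ((v : ℝ) + ε - w) * ((10 : ℝ) ^ w / (10 : ℝ) ^ v)

noncomputable def optimalGFT (N : ℕ) (ε : ℝ) : ℝ :=
  ∑ w ∈ Icc 1 N, ∑ v ∈ Icc w N, tradeGain ε w v

noncomputable def fixedPriceGFT (N : ℕ) (ε p : ℝ) : ℝ :=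
  ∑ w ∈ Icc 1 N, ∑ v ∈ Icc 1 N,
    if (w : ℝ) ≤ p ∧ p ≤ (v : ℝ) + ε then tradeGain ε w v else 0

lemma tradeGain_self (ε : ℝ) (w : ℕ) : tradeGain ε w w = ε := by
  simp [tradeGain]

lemma tradeGain_nonneg {ε : ℝ} (hε : 0 ≤ ε) {w v : ℕ} (h : w ≤ v) : 0 ≤ tradeGain ε w v := by
  have : (w : ℝ) ≤ v := by exact_mod_cast h
  unfold tradeGain
  apply mul_nonneg <;> [linarith; positivity]

lemma mul_le_optimalGFT (N : ℕ) {ε : ℝ} (hε : 0 ≤ ε) : N * ε ≤ optimalGFT N ε := by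
  calc (N : ℝ) * ε = ∑ _w ∈ Icc 1 N, ε := by simp
    _ ≤ optimalGFT N ε := by
      refine sum_le_sum fun w hw => ?_
      calc ε = tradeGain ε w w := (tradeGain_self ε w).symm
        _ ≤ _ := single_le_sum (fun v hv => tradeGain_nonneg hε (mem_Icc.1 hv).1)
          (mem_Icc.2 ⟨le_rfl, (mem_Icc.1 hw).2⟩)

lemma sum_sum_tradeGain_le {ε : ℝ} (hε : 0 ≤ ε) {a b : ℕ} (hab : a ≤ b) {S T : Finset ℕ}
    (hS : ∀ w ∈ S, w ≤ a) (hT : ∀ v ∈ T, b ≤ v) :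
    ∑ w ∈ S, ∑ v ∈ T, tradeGain ε w v ≤
      (10 : ℝ) ^ a / 10 ^ b * ((b - a + ε) * (100 / 81) + 200 / 729) := by
  set c : ℝ := b - a + ε
  have hc : 0 ≤ c := by
    have : (a : ℝ) ≤ b := by exact_mod_cast hab
    linarith
  have hreindex : ∑ w ∈ S, ∑ v ∈ T, tradeGain ε w v = (10 : ℝ) ^ a / 10 ^ b *
      ∑ i ∈ S.image (a - ·), ∑ j ∈ T.image (· - b),
        (c + i + j) * ((10 : ℝ)⁻¹ ^ i * (10 : ℝ)⁻¹ ^ j) := by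
    rw [sum_image (fun x hx y hy h => by have := hS x hx; have := hS y hy; omega),
      mul_sum]
    refine sum_congr rfl fun w hw => ?_
    rw [sum_image (fun x hx y hy h => by have := hT x hx; have := hT y hy; omega),
      mul_sum]
    refine sum_congr rfl fun v hv => ?_
    rw [tradeGain, pow_div_pow_eq_mul_inv_pow_mul_inv_pow (by norm_num) (hS w hw) (hT v hv),
      Nat.cast_sub (hS w hw), Nat.cast_sub (hT v hv)]
    ring
  rw [hreindex]
  gcongr
  calc _ ≤ c / (1 - 10⁻¹) ^ 2 + 2 * 10⁻¹ / (1 - 10⁻¹) ^ 3 :=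
        sum_sum_add_mul_pow_mul_pow_le (by norm_num) (by norm_num) hc _ _
    _ = c * (100 / 81) + 200 / 729 := by ring

lemma floor_le_ceil_sub {ε : ℝ} (hε : ε < 1) (p : ℝ) : ⌊p⌋₊ ≤ ⌈p - ε⌉₊ := by
  rcases lt_or_ge p 0 with hp | hp
  · simp [Nat.floor_of_nonpos hp.le]
  · have : (⌊p⌋₊ : ℝ) < ⌈p - ε⌉₊ + 1 := by
      linarith [Nat.floor_le hp, Nat.le_ceil (p - ε)]
    exact Nat.lt_succ_iff.1 (by exact_mod_cast this)

lemma ceil_sub_le_floor_add_one {ε : ℝ} (hε : 0 ≤ ε) (p : ℝ) : ⌈p - ε⌉₊ ≤ ⌊p⌋₊ + 1 := by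
  refine Nat.ceil_le.2 ?_
  push_cast
  linarith [Nat.lt_floor_add_one p]

lemma fixedPriceGFT_le {ε : ℝ} (hε₀ : 0 ≤ ε) (hε₁ : ε < 1) (N : ℕ) (p : ℝ) :
    fixedPriceGFT N ε p ≤ (10 : ℝ) ^ ⌊p⌋₊ / 10 ^ ⌈p - ε⌉₊ *
      ((⌈p - ε⌉₊ - ⌊p⌋₊ + ε) * (100 / 81) + 200 / 729) := by
  set a := ⌊p⌋₊
  set b := ⌈p - ε⌉₊
  have hab : a ≤ b := floor_le_ceil_sub hε₁ p
  refine le_trans ?_ (sum_sum_tradeGain_le hε₀ hab (S := (Icc 1 N).filter (· ≤ a))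
    (T := (Icc 1 N).filter (b ≤ ·)) (fun w hw => (mem_filter.1 hw).2)
    (fun v hv => (mem_filter.1 hv).2))
  rw [sum_filter]
  refine sum_le_sum fun w _ => ?_
  split_ifs with hwa
  · rw [sum_filter]
    refine sum_le_sum fun v _ => ?_
    split_ifs with htrade hbv hbv
    · rfl
    · exact absurd (Nat.ceil_le.2 (by linarith [htrade.2])) hbv
    · exact tradeGain_nonneg hε₀ (by omega)
    · rfl
  · exact (sum_eq_zero fun v _ => if_neg fun htrade => hwa (Nat.le_floor htrade.1)).le

lemma fixedPriceGFT_le_four_mul {ε : ℝ} (hε₀ : 5 / 36 ≤ ε) (hε₁ : ε < 1) (N : ℕ) (p : ℝ) :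
    fixedPriceGFT N ε p ≤ 4 * ε := by
  refine (fixedPriceGFT_le (by linarith) hε₁ N p).trans ?_
  have hab := floor_le_ceil_sub hε₁ p
  have hba := ceil_sub_le_floor_add_one (by linarith : 0 ≤ ε) p
  obtain h | h : ⌈p - ε⌉₊ = ⌊p⌋₊ ∨ ⌈p - ε⌉₊ = ⌊p⌋₊ + 1 := by omega
  · rw [h, div_self (by positivity), sub_self, zero_add, one_mul]; linarith
  · rw [h, pow_succ]; push_cast; field_simp; linarith

theorem stmt18_general (N : ℕ) (ε : ℝ) (hε1 : 5 / 36 ≤ ε) (hε2 : ε < 1) (p : ℝ) :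
    (N : ℝ) *
        (∑ w ∈ Finset.Icc 1 N, ∑ v ∈ Finset.Icc 1 N,
          (if (w : ℝ) ≤ p ∧ p ≤ (v : ℝ) + ε then
            ((v : ℝ) + ε - (w : ℝ)) * ((10 : ℝ) ^ w / (10 : ℝ) ^ v) else 0)) ≤
      4 * ∑ w ∈ Finset.Icc 1 N, ∑ v ∈ Finset.Icc w N,
          ((v : ℝ) + ε - (w : ℝ)) * ((10 : ℝ) ^ w / (10 : ℝ) ^ v) := by
  change (N : ℝ) * fixedPriceGFT N ε p ≤ 4 * optimalGFT N ε
  calc (N : ℝ) * fixedPriceGFT N ε p ≤ N * (4 * ε) := by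
        gcongr; exact fixedPriceGFT_le_four_mul hε1 hε2 N p
    _ = 4 * (N * ε) := by ring
    _ ≤ 4 * optimalGFT N ε := by gcongr; exact mul_le_optimalGFT N (by linarith)

theorem stmt18 (N : ℕ) (hN : 1 ≤ N) (ε : ℝ) (hε1 : 5 / 36 ≤ ε) (hε2 : ε < 1) (p : ℝ) :
    (N : ℝ) *
        (∑ w ∈ Finset.Icc 1 N, ∑ v ∈ Finset.Icc 1 N,
          (if (w : ℝ) ≤ p ∧ p ≤ (v : ℝ) + ε then
            ((v : ℝ) + ε - (w : ℝ)) * ((10 : ℝ) ^ w / (10 : ℝ) ^ v) else 0)) ≤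
      4 * ∑ w ∈ Finset.Icc 1 N, ∑ v ∈ Finset.Icc w N,
          ((v : ℝ) + ε - (w : ℝ)) * ((10 : ℝ) ^ w / (10 : ℝ) ^ v) :=
  stmt18_general N ε hε1 hε2 p
end

section
/- Fix a natural number N ≥ 1 and let α = (10/9)·(1 − 10^(−N)). Define r = (10^(1−N)/α²)·Σ_{w=1}^{N} Σ_{v=w}^{N} 10^(w−v), with sums over the reals and 10^(w−v) = 10^w / 10^v. Then r ≥ 10^(−N); equivalently, N ≥ log₁₀(1/r). -/
/-! The term `w = v = 1` alone makes the double sum at least `1`, and `α ≤ 10/9` gives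
`α ^ 2 ≤ 10`, so `r ≥ 10 ^ (1 - N) / α ^ 2 ≥ 10 ^ (-N)`. -/

open Finset

lemma one_le_sum_Icc_sum_Icc_pow_div_pow {b : ℝ} (hb : 0 < b) {N : ℕ} (hN : 1 ≤ N) :
    1 ≤ ∑ w ∈ Icc 1 N, ∑ v ∈ Icc w N, b ^ w / b ^ v := by
  have h1 : 1 ∈ Icc 1 N := mem_Icc.2 ⟨le_rfl, hN⟩
  calc (1 : ℝ) = b ^ 1 / b ^ 1 := (div_self (by positivity)).symm
    _ ≤ ∑ v ∈ Icc 1 N, b ^ 1 / b ^ v :=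
      single_le_sum (f := fun v => b ^ 1 / b ^ v) (fun _ _ => by positivity) h1
    _ ≤ ∑ w ∈ Icc 1 N, ∑ v ∈ Icc w N, b ^ w / b ^ v :=
      single_le_sum (f := fun w => ∑ v ∈ Icc w N, b ^ w / b ^ v)
        (fun _ _ => sum_nonneg fun _ _ => by positivity) h1

lemma one_sub_one_div_pow_mem_Ioc {b : ℝ} (hb : 1 < b) {N : ℕ} (hN : 1 ≤ N) :
    1 - 1 / b ^ N ∈ Set.Ioc 0 1 := by
  have hpow : 1 < b ^ N := one_lt_pow₀ hb (by omega)
  have hpos : 0 < 1 / b ^ N := by positivity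
  exact ⟨by linarith [(div_lt_one (by linarith)).2 hpow], by linarith⟩

lemma one_div_le_div_div_sq {x α c : ℝ} (hx : 0 < x) (hα : α ≠ 0) (hαc : α ^ 2 ≤ c) :
    1 / x ≤ c / x / α ^ 2 := by
  rw [div_div, div_le_div_iff₀ hx (by positivity)]
  nlinarith

lemma Real.logb_one_div_le_of_one_div_pow_le {b r : ℝ} (hb : 1 < b) {N : ℕ}
    (hr : 1 / b ^ N ≤ r) : Real.logb b (1 / r) ≤ N := by
  have hbN : 0 < b ^ N := by positivity
  have hr0 : 0 < r := lt_of_lt_of_le (by positivity) hr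
  calc Real.logb b (1 / r) ≤ Real.logb b (b ^ N) :=
        Real.logb_le_logb_of_le hb (by positivity) ((one_div_le hbN hr0).1 hr)
    _ = N := by rw [Real.logb_pow, Real.logb_self_eq_one hb, mul_one]

theorem stmt19 (N : ℕ) (hN : 1 ≤ N) (α r : ℝ)
    (hα : α = (10 / 9) * (1 - 1 / (10 : ℝ) ^ N))
    (hr : r = ((10 : ℝ) / (10 : ℝ) ^ N / α ^ 2) *
      ∑ w ∈ Finset.Icc 1 N, ∑ v ∈ Finset.Icc w N, ((10 : ℝ) ^ w / (10 : ℝ) ^ v)) :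
    1 / (10 : ℝ) ^ N ≤ r ∧ Real.logb 10 (1 / r) ≤ (N : ℝ) := by
  obtain ⟨hpos, hle⟩ := one_sub_one_div_pow_mem_Ioc (by norm_num : (1 : ℝ) < 10) hN
  have hα0 : α ≠ 0 := by rw [hα]; positivity
  have hα_sq : α ^ 2 ≤ 10 := by rw [hα]; nlinarith
  have hcoef := one_div_le_div_div_sq (by positivity : (0 : ℝ) < 10 ^ N) hα0 hα_sq
  have hsum := one_le_sum_Icc_sum_Icc_pow_div_pow (by norm_num : (0 : ℝ) < 10) hN
  have hr_ge : 1 / (10 : ℝ) ^ N ≤ r :=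
    hr ▸ hcoef.trans (le_mul_of_one_le_right (hcoef.trans' (by positivity)) hsum)
  exact ⟨hr_ge, Real.logb_one_div_le_of_one_div_pow_le (by norm_num) hr_ge⟩
end
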